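/- arXiv:0906.5007 — 4 statements merged into one kernel-verified Lean document; each statement's English description precedes it below -/
import Mathlib

section
/- Let {H(k)} (k ≥ 1) be a sequence of n×n row-stochastic matrices and, given z(0) ∈ ℝⁿ, define z(k) = H(k) z(k−1). For s ≤ k let Φ̃(k,s) = H(k)H(k−1)⋯H(s). Suppose there exist an integer B > 0 and a scalar θ > 0 such that [Φ̃(s+B−1, s)]_ij ≥ θ for all i, j and all s ≥ 0, where the indices are shifted so that the first factor is H(s). Define M(k) = max_i z_i(k) and m(k) = min_i z_i(k). Then nθ ≤ 1 and, for every s ≥ 0, M(s+B) − m(s+B) ≤ (1 − nθ)(M(s) − m(s)). -/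
open Matrix

/-- `prodMat H s L = H(s+L) ⋯ H(s+1) H(s)` : the (backward) product of `L+1`
matrices starting from index `s`; this is the transition matrix
`Φ̃(s+L, s)`. -/
def prodMat {n : ℕ} (H : ℕ → Matrix (Fin n) (Fin n) ℝ) (s : ℕ) : ℕ → Matrix (Fin n) (Fin n) ℝ
  | 0 => H s
  | L + 1 => H (s + L + 1) * prodMat H s L

lemma prodMat_row {n : ℕ} (H : ℕ → Matrix (Fin n) (Fin n) ℝ)
    (hrow : ∀ k i, ∑ j, H k i j = 1) (s L : ℕ) :
    ∀ i, ∑ j, prodMat H s L i j = 1 := by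
  induction L with
  | zero => exact hrow s
  | succ L ih =>
    intro i
    simp only [prodMat, Matrix.mul_apply]
    rw [Finset.sum_comm]
    calc ∑ k, ∑ j, H (s + L + 1) i k * prodMat H s L k j
        = ∑ k, H (s + L + 1) i k * ∑ j, prodMat H s L k j := by
          simp [Finset.mul_sum]
      _ = 1 := by simp [ih, hrow]

lemma z_prod {n : ℕ} (H : ℕ → Matrix (Fin n) (Fin n) ℝ) (z : ℕ → Fin n → ℝ)
    (hz : ∀ k, z (k + 1) = (H k).mulVec (z k)) (s : ℕ) :
    ∀ L, z (s + L + 1) = (prodMat H s L).mulVec (z s) := by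
  intro L
  induction L with
  | zero => exact hz s
  | succ L ih =>
    have h1 : z (s + (L + 1) + 1) = (H (s + L + 1)).mulVec (z (s + L + 1)) :=
      hz (s + L + 1)
    rw [h1, ih, mulVec_mulVec]
    rfl

/-- Lemma 2 (Appendix A): for a sequence of row-stochastic matrices whose
transition products over windows of length `B` have all entries at least
`θ > 0`, one has `nθ ≤ 1` and the disagreement `M(k) − m(k)` contracts by a
factor `1 − nθ` over every window of length `B`. -/
theorem stmt_1 {n : ℕ} (hn : 0 < n) (H : ℕ → Matrix (Fin n) (Fin n) ℝ)
    (hstoch_nonneg : ∀ k i j, 0 ≤ H k i j)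
    (hstoch_row : ∀ k i, ∑ j, H k i j = 1)
    (z : ℕ → Fin n → ℝ)
    (hz : ∀ k, z (k + 1) = (H k).mulVec (z k))
    (B : ℕ) (hB : 0 < B) (θ : ℝ) (hθ : 0 < θ)
    (hprod : ∀ s ≥ 0, ∀ i j, θ ≤ prodMat H s (B - 1) i j)
    (M m : ℕ → ℝ)
    (hM : ∀ k, M k = Finset.univ.sup' (Finset.univ_nonempty_iff.mpr ⟨⟨0, hn⟩⟩) (z k))
    (hm : ∀ k, m k = Finset.univ.inf' (Finset.univ_nonempty_iff.mpr ⟨⟨0, hn⟩⟩) (z k)) :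
    (n : ℝ) * θ ≤ 1 ∧ ∀ s, M (s + B) - m (s + B) ≤ (1 - n * θ) * (M s - m s) := by
  have i0 : Fin n := ⟨0, hn⟩
  have hrowP : ∀ s i, ∑ j, prodMat H s (B - 1) i j = 1 :=
    fun s => prodMat_row H hstoch_row s (B - 1)
  have hnθ : (n : ℝ) * θ ≤ 1 := by
    calc (n : ℝ) * θ = ∑ _j : Fin n, θ := by simp [mul_comm]
      _ ≤ ∑ j, prodMat H 0 (B - 1) i0 j :=
          Finset.sum_le_sum fun j _ => hprod 0 le_rfl i0 j
      _ = 1 := hrowP 0 i0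
  refine ⟨hnθ, fun s => ?_⟩
  have hne : (Finset.univ : Finset (Fin n)).Nonempty := ⟨i0, Finset.mem_univ i0⟩
  set P := prodMat H s (B - 1) with hP
  have hzB : z (s + B) = P.mulVec (z s) := by
    have h := z_prod H z hz s (B - 1)
    rwa [show s + (B - 1) + 1 = s + B by omega] at h
  set Mx := Finset.univ.sup' hne (z s) with hMx
  set mx := Finset.univ.inf' hne (z s) with hmx
  set S := ∑ j, z s j with hS
  have hsplit : ∀ i, P.mulVec (z s) i
      = ∑ j, (P i j - θ) * z s j + θ * S := by
    intro i
    rw [mulVec, dotProduct, hS, Finset.mul_sum, ← Finset.sum_add_distrib]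
    exact Finset.sum_congr rfl fun j _ => by ring
  have hsum_sub : ∀ i, ∑ j, (P i j - θ) = 1 - n * θ := by
    intro i
    rw [Finset.sum_sub_distrib, hrowP s i]
    simp [mul_comm]
  have hup : ∀ i, P.mulVec (z s) i ≤ (1 - n * θ) * Mx + θ * S := by
    intro i
    rw [hsplit i]
    have : ∑ j, (P i j - θ) * z s j ≤ ∑ j, (P i j - θ) * Mx :=
      Finset.sum_le_sum fun j _ =>
        mul_le_mul_of_nonneg_left (Finset.le_sup' (z s) (Finset.mem_univ j))
          (sub_nonneg.mpr (hprod s (Nat.zero_le s) i j))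
    have h2 : ∑ j, (P i j - θ) * Mx = (1 - n * θ) * Mx := by
      rw [← Finset.sum_mul, hsum_sub i]
    linarith
  have hdown : ∀ i, (1 - n * θ) * mx + θ * S ≤ P.mulVec (z s) i := by
    intro i
    rw [hsplit i]
    have : ∑ j, (P i j - θ) * mx ≤ ∑ j, (P i j - θ) * z s j :=
      Finset.sum_le_sum fun j _ =>
        mul_le_mul_of_nonneg_left (Finset.inf'_le (z s) (Finset.mem_univ j))
          (sub_nonneg.mpr (hprod s (Nat.zero_le s) i j))
    have h2 : ∑ j, (P i j - θ) * mx = (1 - n * θ) * mx := by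
      rw [← Finset.sum_mul, hsum_sub i]
    linarith
  have hMup : M (s + B) ≤ (1 - n * θ) * Mx + θ * S := by
    rw [hM]
    exact Finset.sup'_le _ _ fun i _ => by rw [hzB]; exact hup i
  have hmdown : (1 - n * θ) * mx + θ * S ≤ m (s + B) := by
    rw [hm]
    exact Finset.le_inf' _ _ fun i _ => by rw [hzB]; exact hdown i
  have hMs : M s = Mx := hM s
  have hms : m s = mx := hm s
  rw [hMs, hms]
  nlinarith [hMup, hmdown]
end

section
/- Under Assumptions 1–3 on the model, the belief sequences converge to a consensus: there exists a scalar random variable x̄ such that, with probability one, lim_{k→∞} x_i(k) = x̄ for every agent i. Moreover x̄ is a convex combination of the initial beliefs: x̄ = Σ_{j=1}^n π_j x_j(0), where π = (π_1,…,π_n) is a random vector with π_j ≥ 0 for all j and Σ_j π_j = 1. -/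
/-!
Almost surely every update is row stochastic, so in each column of the product
`Φ k = W (k - 1) ⋯ W 0` the maximum never increases and the minimum never decreases.
Choosing for each edge `(i, j)` an update `A_ij` or `J_ij` of positive probability with a positive
`(i, j)` entry, one sweep through all edges multiplies to a matrix `G` with positive diagonal and
positive entries along the edges, so by strong connectivity some power `Q = G ^ N` has a positive
column. A row-stochastic matrix whose column is bounded below by `δ > 0` shrinks the spread
`max - min` of every vector by the factor `1 - δ`. By independence and the second Borel–Cantelli
lemma the word of updates producing `Q` occurs infinitely often, so each column of `Φ k` converges
to a constant vector; the limits `π j` form a probability vector and `x k = Φ k x(0)` converges to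
`∑ j, π j * x(0) j`.
-/

open MeasureTheory ProbabilityTheory Matrix Filter

noncomputable section

instance matMeas {n : ℕ} : MeasurableSpace (Matrix (Fin n) (Fin n) ℝ) := MeasurableSpace.pi

/-- the standard basis vector `e_i`. -/
def eVec {n : ℕ} (i : Fin n) : Fin n → ℝ := fun k => if k = i then 1 else 0

/-- `A_{ij} = I − (e_i−e_j)(e_i−e_j)ᵀ/2` : pairwise averaging matrix. -/
def Amat {n : ℕ} (i j : Fin n) : Matrix (Fin n) (Fin n) ℝ :=
  1 - (2⁻¹ : ℝ) • Matrix.vecMulVec (eVec i - eVec j) (eVec i - eVec j)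

/-- `J_{ij} = I − (1−ε) e_i (e_i−e_j)ᵀ` : influence matrix. -/
def Jmat {n : ℕ} (ε : ℝ) (i j : Fin n) : Matrix (Fin n) (Fin n) ℝ :=
  1 - (1 - ε) • Matrix.vecMulVec (eVec i) (eVec i - eVec j)

/-- the common law of the update matrices `W(k)` : with probability
`p_ij β_ij / n` it is `A_ij`, with probability `p_ij α_ij / n` it is `J_ij`,
and with probability `Σ_{i,j} p_ij γ_ij / n` it is the identity. -/
def lawW {n : ℕ} (p α β γ : Fin n → Fin n → ℝ) (ε : ℝ) : Measure (Matrix (Fin n) (Fin n) ℝ) :=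
  ∑ i, ∑ j,
    (ENNReal.ofReal (p i j * β i j / n) • Measure.dirac (Amat i j) +
     ENNReal.ofReal (p i j * α i j / n) • Measure.dirac (Jmat ε i j) +
     ENNReal.ofReal (p i j * γ i j / n) • Measure.dirac (1 : Matrix (Fin n) (Fin n) ℝ))

/-- `isPath E i j L` : there is a directed path of length `L` from `i` to `j`. -/
def isPath {n : ℕ} (E : Fin n → Fin n → Prop) (i j : Fin n) (L : ℕ) : Prop :=
  ∃ f : ℕ → Fin n, f 0 = i ∧ f L = j ∧ ∀ l < L, E (f l) (f (l + 1))

section LeftProd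

variable {α : Type*} [Monoid α]

/-- `leftProd f k = f (k - 1) * ⋯ * f 1 * f 0`. -/
def leftProd (f : ℕ → α) : ℕ → α
  | 0 => 1
  | k + 1 => f k * leftProd f k

@[simp] lemma leftProd_zero (f : ℕ → α) : leftProd f 0 = 1 := rfl

lemma leftProd_succ (f : ℕ → α) (k : ℕ) : leftProd f (k + 1) = f k * leftProd f k := rfl

lemma leftProd_add (f : ℕ → α) (a k : ℕ) :
    leftProd f (a + k) = leftProd (fun t => f (a + t)) k * leftProd f a := by
  induction k with
  | zero => simp
  | succ k ih => rw [← add_assoc, leftProd_succ, ih, leftProd_succ, mul_assoc]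

lemma leftProd_congr {f g : ℕ → α} {k : ℕ} (h : ∀ t < k, f t = g t) :
    leftProd f k = leftProd g k := by
  induction k with
  | zero => rfl
  | succ k ih =>
    rw [leftProd_succ, leftProd_succ, h k k.lt_succ_self, ih fun t ht => h t (by omega)]

lemma leftProd_mem {S : Type*} [SetLike S α] [SubmonoidClass S α] {s : S} {f : ℕ → α}
    {k : ℕ} (h : ∀ t < k, f t ∈ s) : leftProd f k ∈ s := by
  induction k with
  | zero => exact one_mem s
  | succ k ih => exact mul_mem (h k k.lt_succ_self) (ih fun t ht => h t (by omega))

lemma leftProd_mul_of_periodic {f : ℕ → α} {m : ℕ} (hf : Function.Periodic f m) (N : ℕ) :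
    leftProd f (N * m) = leftProd f m ^ N := by
  induction N with
  | zero => simp
  | succ N ih =>
    rw [add_mul, one_mul, leftProd_add, ih, pow_succ']
    congr 2
    funext t
    rw [add_comm]
    exact hf.nat_mul N t

end LeftProd

namespace Matrix

variable {ι : Type*} [Fintype ι]

lemma mul_apply_pos {A B : Matrix ι ι ℝ} (hA : ∀ a b, 0 ≤ A a b) (hB : ∀ a b, 0 ≤ B a b)
    {i l j : ι} (hil : 0 < A i l) (hlj : 0 < B l j) : 0 < (A * B) i j := by
  rw [mul_apply]
  exact (Finset.sum_pos_iff_of_nonneg fun k _ => mul_nonneg (hA i k) (hB k j)).2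
    ⟨l, Finset.mem_univ l, mul_pos hil hlj⟩

variable [DecidableEq ι]

variable (ι) in
def rowStochasticPosDiag : Submonoid (Matrix ι ι ℝ) where
  carrier := {M | M ∈ rowStochastic ℝ ι ∧ ∀ k, 0 < M k k}
  mul_mem' {A B} hA hB :=
    ⟨mul_mem hA.1 hB.1, fun k => mul_apply_pos (fun _ _ => nonneg_of_mem_rowStochastic hA.1)
      (fun _ _ => nonneg_of_mem_rowStochastic hB.1) (hA.2 k) (hB.2 k)⟩
  one_mem' := ⟨one_mem _, fun k => by simp⟩

lemma nonneg_of_mem_rowStochasticPosDiag {M : Matrix ι ι ℝ} (hM : M ∈ rowStochasticPosDiag ι)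
    (a b : ι) : 0 ≤ M a b :=
  nonneg_of_mem_rowStochastic hM.1

lemma leftProd_apply_pos {f : ℕ → Matrix ι ι ℝ} {m s : ℕ}
    (hf : ∀ t < m, f t ∈ rowStochasticPosDiag ι) (hs : s < m) {u v : ι} (huv : 0 < f s u v) :
    0 < leftProd f m u v := by
  obtain ⟨r, rfl⟩ := Nat.exists_eq_add_of_lt hs
  have hlow : leftProd f s ∈ rowStochasticPosDiag ι := leftProd_mem fun t ht => hf t (by omega)
  have hhigh : leftProd (fun t => f (s + 1 + t)) r ∈ rowStochasticPosDiag ι :=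
    leftProd_mem fun t ht => hf _ (by omega)
  have hfs : f s ∈ rowStochasticPosDiag ι := hf s (by omega)
  rw [show s + r + 1 = s + 1 + r by omega, leftProd_add, leftProd_succ]
  exact mul_apply_pos (nonneg_of_mem_rowStochasticPosDiag hhigh)
    (nonneg_of_mem_rowStochasticPosDiag (mul_mem hfs hlow)) (hhigh.2 u)
    (mul_apply_pos (nonneg_of_mem_rowStochasticPosDiag hfs)
      (nonneg_of_mem_rowStochasticPosDiag hlow) huv (hlow.2 v))

lemma pow_apply_pos_of_le {G : Matrix ι ι ℝ} (hG : G ∈ rowStochasticPosDiag ι) {L N : ℕ}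
    (hLN : L ≤ N) {i j : ι} (h : 0 < (G ^ L) i j) : 0 < (G ^ N) i j := by
  obtain ⟨r, rfl⟩ := Nat.exists_eq_add_of_le hLN
  have hr : G ^ r ∈ rowStochasticPosDiag ι := pow_mem hG r
  rw [pow_add]
  exact mul_apply_pos (nonneg_of_mem_rowStochasticPosDiag (pow_mem hG L))
    (nonneg_of_mem_rowStochasticPosDiag hr) h (hr.2 j)

end Matrix

lemma isPath.mono {n : ℕ} {E E' : Fin n → Fin n → Prop} (h : ∀ a b, E a b → E' a b)
    {i j : Fin n} {L : ℕ} : isPath E i j L → isPath E' i j L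
  | ⟨f, h0, hL, hE⟩ => ⟨f, h0, hL, fun l hl => h _ _ (hE l hl)⟩

lemma pow_apply_pos_of_isPath {n : ℕ} {G : Matrix (Fin n) (Fin n) ℝ} (hG : ∀ a b, 0 ≤ G a b)
    {L : ℕ} : ∀ {i j : Fin n}, isPath (fun a b => 0 < G a b) i j L → 0 < (G ^ L) i j := by
  induction L with
  | zero =>
    rintro i j ⟨f, rfl, rfl, -⟩
    simp
  | succ L ih =>
    rintro i j ⟨f, rfl, rfl, hE⟩
    rw [pow_succ']
    exact Matrix.mul_apply_pos hG (Matrix.pow_apply_nonneg hG L) (hE 0 (by omega))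
      (ih ⟨fun l => f (l + 1), rfl, rfl, fun l hl => hE (l + 1) (by omega)⟩)

section Spread

open Finset

variable {ι : Type*} [Fintype ι]

lemma mulVec_apply_sub_eq_sum [DecidableEq ι] {M : Matrix ι ι ℝ}
    (hM : M ∈ rowStochastic ℝ ι) (δ : ℝ) (i₀ : ι) (y : ι → ℝ) (S : ℝ) (i : ι) :
    (M *ᵥ y) i - (δ * y i₀ + (1 - δ) * S) =
      ∑ j, (M i j - if j = i₀ then δ else 0) * (y j - S) := by
  have hrow := sum_row_of_mem_rowStochastic hM i
  simp only [Matrix.mulVec, dotProduct, sub_mul, mul_sub, sum_sub_distrib, ← sum_mul, hrow,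
    ite_mul, zero_mul, sum_ite_eq', mem_univ, if_true]
  ring

variable [Nonempty ι]

def spread (y : ι → ℝ) : ℝ :=
  univ.sup' univ_nonempty y - univ.inf' univ_nonempty y

lemma spread_nonneg (y : ι → ℝ) : 0 ≤ spread y := by
  obtain ⟨i⟩ := ‹Nonempty ι›
  exact sub_nonneg.2 ((inf'_le y (mem_univ i)).trans (le_sup' y (mem_univ i)))

variable [DecidableEq ι] {M : Matrix ι ι ℝ} {δ : ℝ} {i₀ : ι}

lemma sup'_mulVec_le (hM : M ∈ rowStochastic ℝ ι) (hcol : ∀ i, δ ≤ M i i₀)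
    (y : ι → ℝ) :
    univ.sup' univ_nonempty (M *ᵥ y) ≤ δ * y i₀ + (1 - δ) * univ.sup' univ_nonempty y := by
  refine sup'_le _ _ fun i _ => sub_nonpos.1 ?_
  rw [mulVec_apply_sub_eq_sum hM]
  refine sum_nonpos fun j _ =>
    mul_nonpos_of_nonneg_of_nonpos ?_ (sub_nonpos.2 (le_sup' y (mem_univ j)))
  split_ifs with h
  · exact sub_nonneg.2 (h ▸ hcol i)
  · exact (sub_zero (M i j)).symm ▸ nonneg_of_mem_rowStochastic hM

lemma le_inf'_mulVec (hM : M ∈ rowStochastic ℝ ι) (hcol : ∀ i, δ ≤ M i i₀)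
    (y : ι → ℝ) :
    δ * y i₀ + (1 - δ) * univ.inf' univ_nonempty y ≤ univ.inf' univ_nonempty (M *ᵥ y) := by
  refine le_inf' _ _ fun i _ => sub_nonneg.1 ?_
  rw [mulVec_apply_sub_eq_sum hM]
  refine sum_nonneg fun j _ => mul_nonneg ?_ (sub_nonneg.2 (inf'_le y (mem_univ j)))
  split_ifs with h
  · exact sub_nonneg.2 (h ▸ hcol i)
  · exact (sub_zero (M i j)).symm ▸ nonneg_of_mem_rowStochastic hM

lemma spread_mulVec_le (hM : M ∈ rowStochastic ℝ ι) (hcol : ∀ i, δ ≤ M i i₀)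
    (y : ι → ℝ) : spread (M *ᵥ y) ≤ (1 - δ) * spread y := by
  have := sup'_mulVec_le hM hcol y
  have := le_inf'_mulVec hM hcol y
  unfold spread
  linarith

lemma sup'_mulVec_le_sup' (hM : M ∈ rowStochastic ℝ ι) (y : ι → ℝ) :
    univ.sup' univ_nonempty (M *ᵥ y) ≤ univ.sup' univ_nonempty y := by
  simpa using sup'_mulVec_le (i₀ := Classical.arbitrary ι) hM
    (fun _ => nonneg_of_mem_rowStochastic hM) y

lemma inf'_le_inf'_mulVec (hM : M ∈ rowStochastic ℝ ι) (y : ι → ℝ) :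
    univ.inf' univ_nonempty y ≤ univ.inf' univ_nonempty (M *ᵥ y) := by
  simpa using le_inf'_mulVec (i₀ := Classical.arbitrary ι) hM
    (fun _ => nonneg_of_mem_rowStochastic hM) y

end Spread

section Consensus

open Finset

variable {ι : Type*} [Fintype ι] [Nonempty ι]

theorem exists_tendsto_of_frequently_spread_le {y : ℕ → ι → ℝ}
    (hsup : Antitone fun k => univ.sup' univ_nonempty (y k))
    (hinf : Monotone fun k => univ.inf' univ_nonempty (y k)) {δ : ℝ} (hδ : 0 < δ) {T : ℕ}
    (hcontr : ∃ᶠ b in atTop, spread (y (b + T)) ≤ (1 - δ) * spread (y b)) :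
    ∃ c, ∀ i, Tendsto (fun k => y k i) atTop (nhds c) := by
  set S := fun k => univ.sup' univ_nonempty (y k)
  set I := fun k => univ.inf' univ_nonempty (y k)
  have hIS : ∀ k, I k ≤ S k := fun k => sub_nonneg.1 (spread_nonneg (y k))
  have hS : Tendsto S atTop (nhds (⨅ k, S k)) :=
    tendsto_atTop_ciInf hsup ⟨I 0, by
      rintro _ ⟨k, rfl⟩
      exact (hinf k.zero_le).trans (hIS k)⟩
  have hI : Tendsto I atTop (nhds (⨆ k, I k)) :=
    tendsto_atTop_ciSup hinf ⟨S 0, by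
      rintro _ ⟨k, rfl⟩
      exact (hIS k).trans (hsup k.zero_le)⟩
  set s := (⨅ k, S k) - ⨆ k, I k
  have hspread : Tendsto (fun k => spread (y k)) atTop (nhds s) := hS.sub hI
  have hs_le : ∀ k, s ≤ spread (y k) :=
    (show Antitone fun k => spread (y k) from fun a b hab => sub_le_sub (hsup hab) (hinf hab))
      |>.le_of_tendsto hspread
  have hs_nonneg : 0 ≤ s := ge_of_tendsto' hspread fun k => spread_nonneg (y k)
  have hs_contr : s ≤ (1 - δ) * s :=
    ge_of_tendsto_of_frequently (hspread.const_mul (1 - δ))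
      (hcontr.mono fun b hb => (hs_le _).trans hb)
  have hS_lim : (⨅ k, S k) = ⨆ k, I k := by nlinarith
  exact ⟨⨆ k, I k, fun i => tendsto_of_tendsto_of_tendsto_of_le_of_le hI (hS_lim ▸ hS)
    (fun k => inf'_le _ (mem_univ i)) (fun k => le_sup' _ (mem_univ i))⟩

variable [DecidableEq ι]

theorem exists_tendsto_leftProd_apply {M : ℕ → Matrix ι ι ℝ}
    (hM : ∀ k, M k ∈ rowStochastic ℝ ι) {Q : Matrix ι ι ℝ}
    (hQ : Q ∈ rowStochastic ℝ ι) {i₀ : ι} (hQpos : ∀ i, 0 < Q i i₀) {T : ℕ}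
    (hwin : ∃ᶠ b in atTop, leftProd M (b + T) = Q * leftProd M b) (j : ι) :
    ∃ c, ∀ i, Tendsto (fun k => leftProd M k i j) atTop (nhds c) := by
  set δ := univ.inf' univ_nonempty fun i => Q i i₀
  have hδ : 0 < δ := (lt_inf'_iff _).2 fun i _ => hQpos i
  have hcol : ∀ i, δ ≤ Q i i₀ := fun i => inf'_le _ (mem_univ i)
  have hstep : ∀ k, (fun i => leftProd M (k + 1) i j) = M k *ᵥ fun i => leftProd M k i j :=
    fun k => rfl
  refine exists_tendsto_of_frequently_spread_le
    (antitone_nat_of_succ_le fun k => ?_) (monotone_nat_of_le_succ fun k => ?_) hδ (T := T)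
    (hwin.mono fun b hb => ?_)
  · simpa only [hstep] using sup'_mulVec_le_sup' (hM k) _
  · simpa only [hstep] using inf'_le_inf'_mulVec (hM k) _
  · rw [hb]
    exact spread_mulVec_le hQ hcol fun i => leftProd M b i j

end Consensus

section Limits

variable {ι : Type*} [Fintype ι] [DecidableEq ι]

lemma mulVec_eq_leftProd_mulVec {M : ℕ → Matrix ι ι ℝ} {y : ℕ → ι → ℝ}
    (hy : ∀ k, y (k + 1) = M k *ᵥ y k) (k : ℕ) : y k = leftProd M k *ᵥ y 0 := by
  induction k with
  | zero => simp
  | succ k ih => rw [hy, ih, leftProd_succ, mulVec_mulVec]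

lemma mem_stdSimplex_of_tendsto {Φ : ℕ → Matrix ι ι ℝ}
    (hΦ : ∀ k, Φ k ∈ rowStochastic ℝ ι) {π : ι → ℝ} {i : ι}
    (hlim : ∀ j, Tendsto (fun k => Φ k i j) atTop (nhds (π j))) :
    π ∈ stdSimplex ℝ ι :=
  (isClosed_stdSimplex ℝ ι).mem_of_tendsto (tendsto_pi_nhds.2 hlim) <|
    Eventually.of_forall fun k =>
      ⟨fun _ => nonneg_of_mem_rowStochastic (hΦ k), sum_row_of_mem_rowStochastic (hΦ k) i⟩

end Limits

namespace ProbabilityTheory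

variable {Ω α κ ι : Type*} [MeasurableSpace Ω] [MeasurableSpace α] {μ : Measure Ω}

lemma iIndepFun.measure_iInter_preimage [Fintype ι] {V : κ × ι → Ω → α}
    (hV : iIndepFun V μ) {C : ι → Set α} (hC : ∀ t, MeasurableSet (C t)) (m : κ) :
    μ (⋂ t, V (m, t) ⁻¹' C t) = ∏ t, μ (V (m, t) ⁻¹' C t) :=
  (hV.precomp (Prod.mk_right_injective m)).meas_iInter fun t => ⟨C t, hC t, rfl⟩

lemma iIndepFun.iIndepSet_iInter_preimage [Fintype ι] {V : κ × ι → Ω → α}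
    (hV : iIndepFun V μ) (hmeas : ∀ p, Measurable (V p)) {C : ι → Set α}
    (hC : ∀ t, MeasurableSet (C t)) : iIndepSet (fun m => ⋂ t, V (m, t) ⁻¹' C t) μ := by
  rw [iIndepSet_iff_meas_biInter fun m => MeasurableSet.iInter fun t => hmeas _ (hC t)]
  intro s
  have hprod : (⋂ m ∈ s, ⋂ t, V (m, t) ⁻¹' C t) =
      ⋂ p ∈ s ×ˢ Finset.univ, V p ⁻¹' C p.2 := by
    ext ω
    simp only [Set.mem_iInter, Set.mem_preimage, Finset.mem_product, Finset.mem_univ, and_true,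
      Prod.forall]
    exact ⟨fun h a b ha => h a ha b, fun h a ha b => h a b ha⟩
  rw [hprod, hV.meas_biInter fun p _ => ⟨C p.2, hC p.2, rfl⟩, Finset.prod_product]
  exact Finset.prod_congr rfl fun m _ => (hV.measure_iInter_preimage hC m).symm

theorem ae_frequently_forall_mem {W : ℕ → Ω → α} (hmeas : ∀ k, Measurable (W k))
    (hindep : iIndepFun W μ) {ν : Measure α} (hlaw : ∀ k, μ.map (W k) = ν) {T : ℕ}
    {A : Fin T → Set α} (hA : ∀ t, MeasurableSet (A t)) (hpos : ∀ t, ν (A t) ≠ 0) :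
    ∀ᵐ ω ∂μ, ∃ᶠ b in atTop, ∀ t : Fin T, W (b + t) ω ∈ A t := by
  have := hindep.isProbabilityMeasure
  -- blocks of length `T` with one free step in between, so that block `m` starts at a time `≥ m`
  set V : ℕ × Fin T → Ω → α := fun p => W (p.1 * (T + 1) + p.2)
  have hinj : Function.Injective fun p : ℕ × Fin T => p.1 * (T + 1) + p.2 := by
    rintro ⟨a, s⟩ ⟨b, t⟩ h
    simp only [add_comm (_ * (T + 1))] at h
    have hdiv := congrArg (· / (T + 1)) h
    have hmod := congrArg (· % (T + 1)) h
    simp only [Nat.add_mul_div_right _ _ T.succ_pos, Nat.add_mul_mod_self_right,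
      Nat.div_eq_of_lt (Nat.lt_succ_of_lt s.2), Nat.div_eq_of_lt (Nat.lt_succ_of_lt t.2),
      Nat.mod_eq_of_lt (Nat.lt_succ_of_lt s.2), Nat.mod_eq_of_lt (Nat.lt_succ_of_lt t.2)]
      at hdiv hmod
    ext <;> simp_all
  have hV : iIndepFun V μ := hindep.precomp hinj
  set B : ℕ → Set Ω := fun m => ⋂ t, V (m, t) ⁻¹' A t
  have hB_meas : ∀ m, MeasurableSet (B m) := fun m => MeasurableSet.iInter fun t => hmeas _ (hA t)
  have hB_measure : ∀ m, μ (B m) = ∏ t, ν (A t) := fun m => by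
    rw [hV.measure_iInter_preimage hA m]
    exact Finset.prod_congr rfl fun t _ => by rw [← hlaw, Measure.map_apply (hmeas _) (hA t)]
  have hsum : ∑' m, μ (B m) = ⊤ := by
    simp only [hB_measure]
    exact ENNReal.tsum_const_eq_top_of_ne_zero (Finset.prod_ne_zero_iff.2 fun t _ => hpos t)
  have hlimsup : μ (limsup B atTop) = μ Set.univ := by
    rw [measure_univ]
    exact measure_limsup_eq_one hB_meas (hV.iIndepSet_iInter_preimage (fun p => hmeas _) hA) hsum
  filter_upwards [(ae_mem_iff_measure_eq
    (MeasurableSet.measurableSet_limsup hB_meas).nullMeasurableSet).2 hlimsup] with ω hω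
  refine (tendsto_atTop_mono (fun m => Nat.le_mul_of_pos_right m T.succ_pos) tendsto_id).frequently
    (mem_limsup_iff_frequently_mem.1 hω |>.mono fun m hm => ?_)
  simpa [B, V] using hm

end ProbabilityTheory

instance {n : ℕ} : MeasurableSingletonClass (Matrix (Fin n) (Fin n) ℝ) :=
  inferInstanceAs (MeasurableSingletonClass (Fin n → Fin n → ℝ))

section Model

variable {n : ℕ}

lemma Amat_apply (i j k l : Fin n) :
    Amat i j k l =
      (if k = l then 1 else 0) - 2⁻¹ * ((eVec i - eVec j) k * (eVec i - eVec j) l) := by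
  simp [Amat, vecMulVec_apply, one_apply]

lemma Jmat_apply (ε : ℝ) (i j k l : Fin n) :
    Jmat ε i j k l = (if k = l then 1 else 0) - (1 - ε) * (eVec i k * (eVec i - eVec j) l) := by
  simp [Jmat, vecMulVec_apply, one_apply]

lemma sum_eVec (i : Fin n) : ∑ l, eVec i l = 1 := by
  simp [eVec]

lemma Amat_mem_rowStochasticPosDiag (i j : Fin n) : Amat i j ∈ rowStochasticPosDiag (Fin n) := by
  refine ⟨mem_rowStochastic_iff_sum.2 ⟨fun k l => ?_, fun k => ?_⟩, fun k => ?_⟩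
  · rw [Amat_apply]
    simp only [eVec, Pi.sub_apply]
    split_ifs <;> subst_vars <;> first | contradiction | norm_num
  · simp [Amat_apply, Finset.sum_sub_distrib, ← Finset.mul_sum, sum_eVec]
  · rw [Amat_apply]
    simp only [eVec, Pi.sub_apply]
    split_ifs <;> subst_vars <;> first | contradiction | norm_num

lemma Jmat_mem_rowStochasticPosDiag {ε : ℝ} (hε0 : 0 < ε) (hε1 : ε ≤ 1) (i j : Fin n) :
    Jmat ε i j ∈ rowStochasticPosDiag (Fin n) := by
  refine ⟨mem_rowStochastic_iff_sum.2 ⟨fun k l => ?_, fun k => ?_⟩, fun k => ?_⟩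
  · rw [Jmat_apply]
    simp only [eVec, Pi.sub_apply]
    split_ifs <;> subst_vars <;> first | contradiction | norm_num <;> linarith
  · simp [Jmat_apply, Finset.sum_sub_distrib, ← Finset.mul_sum, sum_eVec]
  · rw [Jmat_apply]
    simp only [eVec, Pi.sub_apply]
    split_ifs <;> subst_vars <;> first | contradiction | norm_num <;> linarith

lemma Amat_apply_of_ne {i j : Fin n} (hij : i ≠ j) : Amat i j i j = 2⁻¹ := by
  simp [Amat_apply, eVec, hij, hij.symm]

lemma Jmat_apply_of_ne (ε : ℝ) {i j : Fin n} (hij : i ≠ j) : Jmat ε i j i j = 1 - ε := by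
  simp [Jmat_apply, eVec, hij, hij.symm]

end Model

section Law

variable {n : ℕ} (p α β γ : Fin n → Fin n → ℝ) {ε : ℝ}

lemma ae_mem_rowStochastic_lawW (hε0 : 0 < ε) (hε1 : ε ≤ 1) :
    ∀ᵐ M ∂lawW p α β γ ε, M ∈ rowStochastic ℝ (Fin n) := by
  rw [ae_iff]
  simp [lawW, Measure.finsetSum_apply, Measure.dirac_apply, (Amat_mem_rowStochasticPosDiag _ _).1,
    (Jmat_mem_rowStochasticPosDiag hε0 hε1 _ _).1, one_mem]

variable {p α β γ}

lemma lawW_singleton_Amat_ne_zero {i j : Fin n} (hpos : 0 < p i j * β i j) :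
    lawW p α β γ ε {Amat i j} ≠ 0 := by
  have : (0 : ℝ) < n := Nat.cast_pos.2 i.pos
  simp only [lawW, Measure.finsetSum_apply, ne_eq, Finset.sum_eq_zero_iff, Finset.mem_univ,
    true_implies, not_forall]
  exact ⟨i, j, by simp [hpos, this]⟩

lemma lawW_singleton_Jmat_ne_zero {i j : Fin n} (hpos : 0 < p i j * α i j) :
    lawW p α β γ ε {Jmat ε i j} ≠ 0 := by
  have : (0 : ℝ) < n := Nat.cast_pos.2 i.pos
  simp only [lawW, Measure.finsetSum_apply, ne_eq, Finset.sum_eq_zero_iff, Finset.mem_univ,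
    true_implies, not_forall]
  exact ⟨i, j, by simp [hpos, this]⟩

end Law

section Program

variable {n : ℕ} {p α β γ : Fin n → Fin n → ℝ} {ε : ℝ}

lemma exists_lawW_edge_matrix (hp_diag : ∀ i, p i i = 0)
    (hint : ∀ i j, 0 < p i j → 0 < β i j + α i j) (hε0 : 0 < ε) (hε1 : ε < 1)
    {i j : Fin n} (hij : 0 < p i j) :
    ∃ M ∈ rowStochasticPosDiag (Fin n), 0 < M i j ∧ lawW p α β γ ε {M} ≠ 0 := by
  have hne : i ≠ j := by
    rintro rfl
    exact hij.ne' (hp_diag i)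
  by_cases hβ : 0 < β i j
  · refine ⟨Amat i j, Amat_mem_rowStochasticPosDiag i j, ?_,
      lawW_singleton_Amat_ne_zero (mul_pos hij hβ)⟩
    rw [Amat_apply_of_ne hne]
    norm_num
  · have hα : 0 < α i j := by linarith [hint i j hij]
    refine ⟨Jmat ε i j, Jmat_mem_rowStochasticPosDiag hε0 hε1.le i j, ?_,
      lawW_singleton_Jmat_ne_zero (mul_pos hij hα)⟩
    rw [Jmat_apply_of_ne ε hne]
    linarith

lemma exists_lawW_sweep (hp_diag : ∀ i, p i i = 0)
    (hint : ∀ i j, 0 < p i j → 0 < β i j + α i j) (hε0 : 0 < ε) (hε1 : ε < 1) :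
    ∃ (m : ℕ) (g : ℕ → Matrix (Fin n) (Fin n) ℝ),
      (∀ t < m, g t ∈ rowStochasticPosDiag (Fin n) ∧ lawW p α β γ ε {g t} ≠ 0) ∧
      ∀ a b, 0 < p a b → 0 < leftProd g m a b := by
  classical
  choose! M hM_mem hM_pos hM_law using fun (e : Fin n × Fin n) (he : 0 < p e.1 e.2) =>
    exists_lawW_edge_matrix (γ := γ) hp_diag hint hε0 hε1 he
  set es := (Finset.univ.filter fun e : Fin n × Fin n => 0 < p e.1 e.2).toList
  have hes : ∀ e, e ∈ es ↔ 0 < p e.1 e.2 := by simp [es]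
  have hg : ∀ t (ht : t < es.length), 0 < p es[t].1 es[t].2 := fun t ht =>
    (hes _).1 (List.getElem_mem ht)
  refine ⟨es.length, fun t => if ht : t < es.length then M es[t] else 1, fun t ht => ?_,
    fun a b hab => ?_⟩
  · simp only [dif_pos ht]
    exact ⟨hM_mem _ (hg t ht), hM_law _ (hg t ht)⟩
  · have hmem : (a, b) ∈ es := (hes _).2 hab
    refine leftProd_apply_pos (s := es.idxOf (a, b)) (fun t ht => ?_)
      (List.idxOf_lt_length_of_mem hmem) ?_
    · simp only [dif_pos ht]
      exact hM_mem _ (hg t ht)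
    · simp only [dif_pos (List.idxOf_lt_length_of_mem hmem), List.getElem_idxOf]
      exact hM_pos _ hab

lemma exists_lawW_program (hp_diag : ∀ i, p i i = 0)
    (hconn : ∀ i j : Fin n, ∃ L, isPath (fun a b => 0 < p a b) i j L)
    (hint : ∀ i j, 0 < p i j → 0 < β i j + α i j) (hε0 : 0 < ε) (hε1 : ε < 1)
    (i₀ : Fin n) :
    ∃ (T : ℕ) (prog : ℕ → Matrix (Fin n) (Fin n) ℝ),
      (∀ t < T, lawW p α β γ ε {prog t} ≠ 0) ∧
      leftProd prog T ∈ rowStochasticPosDiag (Fin n) ∧ ∀ i, 0 < leftProd prog T i i₀ := by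
  obtain ⟨m, g, hg, hg_pos⟩ := exists_lawW_sweep (γ := γ) hp_diag hint hε0 hε1
  have hG : leftProd g m ∈ rowStochasticPosDiag (Fin n) := leftProd_mem fun t ht => (hg t ht).1
  choose L hL using fun i => hconn i i₀
  have hprog : leftProd (fun t => g (t % m)) (Finset.univ.sup L * m) =
      leftProd g m ^ Finset.univ.sup L := by
    rw [leftProd_mul_of_periodic fun t => by simp only [Nat.add_mod_right]]
    exact congrArg (· ^ _) (leftProd_congr fun t ht => by rw [Nat.mod_eq_of_lt ht])
  refine ⟨Finset.univ.sup L * m, fun t => g (t % m), fun t ht => (hg _ (Nat.mod_lt _ ?_)).2, ?_,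
    fun i => ?_⟩
  · exact Nat.pos_of_ne_zero fun hm => by simp [hm] at ht
  · exact hprog ▸ pow_mem hG _
  · rw [hprog]
    exact pow_apply_pos_of_le hG (Finset.le_sup (Finset.mem_univ i)) <|
      pow_apply_pos_of_isPath (nonneg_of_mem_rowStochasticPosDiag hG) ((hL i).mono hg_pos)

end Program

lemma measurable_leftProd_apply {n : ℕ} {Ω : Type*} [MeasurableSpace Ω]
    {W : ℕ → Ω → Matrix (Fin n) (Fin n) ℝ} (hW : ∀ k, Measurable (W k)) (k : ℕ)
    (i j : Fin n) :
    Measurable fun ω => leftProd (fun k => W k ω) k i j := by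
  induction k generalizing i j with
  | zero => exact measurable_const
  | succ k ih =>
    simp only [leftProd_succ, Matrix.mul_apply]
    exact Finset.measurable_sum _ fun l _ =>
      ((measurable_pi_apply l).comp ((measurable_pi_apply i).comp (hW k))).mul (ih l j)

theorem stmt_2_general {n : ℕ} (hn : 2 ≤ n)
    (p α β γ : Fin n → Fin n → ℝ)
    -- Assumption 1 (meeting probabilities)
    (hp_diag : ∀ i, p i i = 0)
    -- Assumption 2 (connectivity of E = {(i,j) | p_ij > 0})
    (hconn : ∀ i j : Fin n, ∃ L, isPath (fun a b => 0 < p a b) i j L)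
    -- Assumption 3 (interaction probabilities)
    (hint : ∀ i j, 0 < p i j → 0 < β i j + α i j)
    (ε : ℝ) (hε0 : 0 < ε) (hε : ε ≤ 1 / 2)
    -- the i.i.d. random update matrices
    {Ω : Type*} [MeasureSpace Ω]
    (W : ℕ → Ω → Matrix (Fin n) (Fin n) ℝ)
    (hWmeas : ∀ k, Measurable (W k))
    (hWlaw : ∀ k, Measure.map (W k) ℙ = lawW p α β γ ε)
    (hWindep : iIndepFun (m := fun _ => matMeas) W ℙ)
    -- the belief process
    (x0 : Fin n → ℝ) (x : ℕ → Ω → Fin n → ℝ)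
    (hx0 : ∀ ω, x 0 ω = x0)
    (hxrec : ∀ k ω, x (k + 1) ω = (W k ω).mulVec (x k ω)) :
    ∃ xbar : Ω → ℝ, ∃ π : Ω → Fin n → ℝ, Measurable xbar ∧ Measurable π ∧
      ∀ᵐ ω ∂(ℙ : Measure Ω),
        (∀ i, Tendsto (fun k => x k ω i) atTop (nhds (xbar ω))) ∧
        xbar ω = ∑ j, π ω j * x0 j ∧
        (∀ j, 0 ≤ π ω j) ∧ ∑ j, π ω j = 1 := by
  have : NeZero n := ⟨by omega⟩
  obtain ⟨T, prog, hprog, hQ, hQpos⟩ :=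
    exists_lawW_program hp_diag hconn hint hε0 (by linarith) (0 : Fin n)
  set Φ : ℕ → Ω → Matrix (Fin n) (Fin n) ℝ := fun k ω => leftProd (fun k => W k ω) k
  set π : Ω → Fin n → ℝ := fun ω j => liminf (fun k => Φ k ω 0 j) atTop
  have hπ_meas : ∀ j, Measurable fun ω => π ω j := fun j =>
    Measurable.liminf fun k => measurable_leftProd_apply hWmeas k 0 j
  refine ⟨fun ω => ∑ j, π ω j * x0 j, π,
    Finset.measurable_sum _ fun j _ => (hπ_meas j).mul_const _,
    measurable_pi_lambda _ hπ_meas, ?_⟩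
  have hstoch : ∀ᵐ ω, ∀ k, W k ω ∈ rowStochastic ℝ (Fin n) := ae_all_iff.2 fun k =>
    ae_of_ae_map (hWmeas k).aemeasurable <|
      (hWlaw k).symm ▸ ae_mem_rowStochastic_lawW p α β γ hε0 (by linarith)
  filter_upwards [hstoch, ae_frequently_forall_mem hWmeas hWindep hWlaw
    (A := fun t : Fin T => {prog t}) (fun t => measurableSet_singleton _) fun t => hprog t t.2]
    with ω hω hwin
  have hlim : ∀ j i, Tendsto (fun k => Φ k ω i j) atTop (nhds (π ω j)) := fun j => by
    obtain ⟨c, hc⟩ := exists_tendsto_leftProd_apply hω hQ.1 hQpos (hwin.mono fun b hb => by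
      rw [leftProd_add _ b T, leftProd_congr fun t ht => Set.mem_singleton_iff.1 (hb ⟨t, ht⟩)])
      j
    rw [show π ω j = c from (hc 0).liminf_eq]
    exact hc
  obtain ⟨hπ_nonneg, hπ_sum⟩ :=
    mem_stdSimplex_of_tendsto (fun k => leftProd_mem fun t _ => hω t) fun j => hlim j 0
  refine ⟨fun i => ?_, rfl, hπ_nonneg, hπ_sum⟩
  have hx : ∀ k, x k ω = Φ k ω *ᵥ x0 := fun k => by
    rw [mulVec_eq_leftProd_mulVec (y := (x · ω)) (hxrec · ω) k, hx0]
  simp only [hx]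
  exact tendsto_finsetSum _ fun j _ => (hlim j i).mul_const (x0 j)

/-- Theorem 1: under Assumptions 1–3, the beliefs converge with probability one
to a common (random) consensus value `x̄`, which is a convex combination
`Σ_j π_j x_j(0)` of the initial beliefs, with `π` a random stochastic vector. -/
theorem stmt_2 {n : ℕ} (hn : 2 ≤ n)
    (p α β γ : Fin n → Fin n → ℝ)
    -- Assumption 1 (meeting probabilities)
    (hp_diag : ∀ i, p i i = 0) (hp_nonneg : ∀ i j, 0 ≤ p i j) (hp_row : ∀ i, ∑ j, p i j = 1)
    -- Assumption 2 (connectivity of E = {(i,j) | p_ij > 0})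
    (hconn : ∀ i j : Fin n, ∃ L, isPath (fun a b => 0 < p a b) i j L)
    -- Assumption 3 (interaction probabilities)
    (hα : ∀ i j, 0 ≤ α i j) (hβ : ∀ i j, 0 ≤ β i j) (hγ : ∀ i j, 0 ≤ γ i j)
    (habg : ∀ i j, α i j + β i j + γ i j = 1)
    (hint : ∀ i j, 0 < p i j → 0 < β i j + α i j)
    (ε : ℝ) (hε0 : 0 < ε) (hε : ε ≤ 1 / 2)
    -- the i.i.d. random update matrices
    {Ω : Type*} [MeasureSpace Ω] [IsProbabilityMeasure (ℙ : Measure Ω)]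
    (W : ℕ → Ω → Matrix (Fin n) (Fin n) ℝ)
    (hWmeas : ∀ k, Measurable (W k))
    (hWlaw : ∀ k, Measure.map (W k) ℙ = lawW p α β γ ε)
    (hWindep : iIndepFun (m := fun _ => matMeas) W ℙ)
    -- the belief process
    (x0 : Fin n → ℝ) (x : ℕ → Ω → Fin n → ℝ)
    (hx0 : ∀ ω, x 0 ω = x0)
    (hxrec : ∀ k ω, x (k + 1) ω = (W k ω).mulVec (x k ω)) :
    ∃ xbar : Ω → ℝ, ∃ π : Ω → Fin n → ℝ, Measurable xbar ∧ Measurable π ∧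
      ∀ᵐ ω ∂(ℙ : Measure Ω),
        (∀ i, Tendsto (fun k => x k ω i) atTop (nhds (xbar ω))) ∧
        xbar ω = ∑ j, π ω j * x0 j ∧
        (∀ j, 0 ≤ π ω j) ∧ ∑ j, π ω j = 1 :=
  stmt_2_general hn p α β γ hp_diag hconn hint ε hε0 hε W hWmeas hWlaw hWindep x0 x hx0 hxrec
end
end

section
/- Under Assumptions 1–3 on the model, assume in addition there are no forceful agents, i.e., α_ij = 0 for all i, j. Then, with probability one, lim_{k→∞} x_i(k) = (1/n) Σ_{j=1}^n x_j(0) for every agent i; that is, all beliefs converge to the average of the initial beliefs. -/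
open MeasureTheory ProbabilityTheory Matrix Filter

noncomputable section

/-!
Without forceful agents every update matrix is some `A_ij` or `I`. Both have unit column sums,
so the total belief is almost surely conserved, and `A_ij` lowers the squared distance to the
mean by `(x_i - x_j)^2 / 2`. Since `W k` is independent of `x k`, one step therefore multiplies
the expected disagreement by at most `1 - λ / (2n)`, where `λ > 0` is the Poincaré constant of
the Dirichlet form `∑ p_ij β_ij (u_i - u_j)^2` on zero-sum vectors; it is positive because the
meeting graph is strongly connected, and exists by compactness of the unit sphere. The expected
disagreements are then summable, so the disagreement tends to zero almost surely, and together
with the conserved sum this forces every belief to the initial average.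
-/

open scoped ENNReal Topology

namespace ProbabilityTheory

section Recursion

variable {Ω E β : Type*} [MeasurableSpace E] [mβ : MeasurableSpace β]
  {W : ℕ → Ω → β} {X : ℕ → Ω → E} {F : E → β → E} {x₀ : E}

theorem measurable_iSup_comap_of_recursion (hF : Measurable (Function.uncurry F))
    (hX0 : ∀ ω, X 0 ω = x₀) (hrec : ∀ k ω, X (k + 1) ω = F (X k ω) (W k ω)) (k : ℕ) :
    Measurable[⨆ i ∈ Set.Iio k, mβ.comap (W i)] (X k) := by
  induction k with
  | zero =>
    rw [funext hX0]
    exact measurable_const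
  | succ k ih =>
    have hX : Measurable[⨆ i ∈ Set.Iio (k + 1), mβ.comap (W i)] (X k) :=
      ih.mono (biSup_mono fun i (hi : i < k) => by simp only [Set.mem_Iio]; omega) le_rfl
    have hW : Measurable[⨆ i ∈ Set.Iio (k + 1), mβ.comap (W i)] (W k) :=
      Measurable.of_comap_le (le_iSup₂ (f := fun i (_ : i ∈ Set.Iio (k + 1)) => mβ.comap (W i))
        k (by simp))
    rw [funext (hrec k)]
    exact hF.comp (hX.prodMk hW)

variable [MeasurableSpace Ω] {P : Measure Ω}

theorem measurable_of_recursion (hF : Measurable (Function.uncurry F))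
    (hX0 : ∀ ω, X 0 ω = x₀) (hrec : ∀ k ω, X (k + 1) ω = F (X k ω) (W k ω))
    (hW : ∀ k, Measurable (W k)) (k : ℕ) : Measurable (X k) :=
  (measurable_iSup_comap_of_recursion hF hX0 hrec k).mono
    (iSup₂_le fun i _ => (hW i).comap_le) le_rfl

theorem indepFun_of_recursion (hF : Measurable (Function.uncurry F))
    (hX0 : ∀ ω, X 0 ω = x₀) (hrec : ∀ k ω, X (k + 1) ω = F (X k ω) (W k ω))
    (hW : ∀ k, Measurable (W k)) (hind : iIndepFun W P) (k : ℕ) :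
    IndepFun (X k) (W k) P := by
  have h := indep_iSup_of_disjoint (fun i => (hW i).comap_le) hind.iIndep
    (S := Set.Iio k) (T := {k}) (by simp)
  rw [IndepFun_iff_Indep]
  refine indep_of_indep_of_le h (measurable_iSup_comap_of_recursion hF hX0 hrec k).comap_le ?_
  simp

end Recursion

variable {Ω α β : Type*} [MeasurableSpace Ω] [MeasurableSpace α] [MeasurableSpace β]
  {P : Measure Ω}

theorem IndepFun.lintegral_comp_eq [IsFiniteMeasure P] {X : Ω → α} {Y : Ω → β}
    (h : IndepFun X Y P) (hX : Measurable X) (hY : Measurable Y) {f : α → β → ℝ≥0∞}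
    (hf : Measurable (Function.uncurry f)) :
    ∫⁻ ω, f (X ω) (Y ω) ∂P = ∫⁻ ω, ∫⁻ b, f (X ω) b ∂(P.map Y) ∂P := by
  calc ∫⁻ ω, f (X ω) (Y ω) ∂P
      = ∫⁻ z, Function.uncurry f z ∂(P.map fun ω => (X ω, Y ω)) :=
        (lintegral_map hf (hX.prodMk hY)).symm
    _ = ∫⁻ z, Function.uncurry f z ∂((P.map X).prod (P.map Y)) := by
        rw [(indepFun_iff_map_prod_eq_prod_map_map hX.aemeasurable hY.aemeasurable).1 h]
    _ = ∫⁻ a, ∫⁻ b, f a b ∂(P.map Y) ∂(P.map X) := lintegral_prod _ hf.aemeasurable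
    _ = ∫⁻ ω, ∫⁻ b, f (X ω) b ∂(P.map Y) ∂P := lintegral_map hf.lintegral_prod_right' hX

theorem lintegral_succ_le_of_recursion [IsFiniteMeasure P] {E : Type*} [MeasurableSpace E]
    {W : ℕ → Ω → β} {X : ℕ → Ω → E} {F : E → β → E} {x₀ : E}
    (hF : Measurable (Function.uncurry F)) (hX0 : ∀ ω, X 0 ω = x₀)
    (hrec : ∀ k ω, X (k + 1) ω = F (X k ω) (W k ω)) (hW : ∀ k, Measurable (W k))
    (hind : iIndepFun W P) {μ : Measure β} (hlaw : ∀ k, P.map (W k) = μ)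
    {V : E → ℝ≥0∞} (hV : Measurable V) {r : ℝ≥0∞} (hcontr : ∀ x, ∫⁻ b, V (F x b) ∂μ ≤ r * V x)
    (k : ℕ) : ∫⁻ ω, V (X (k + 1) ω) ∂P ≤ r * ∫⁻ ω, V (X k ω) ∂P := by
  have hXk := measurable_of_recursion hF hX0 hrec hW k
  calc ∫⁻ ω, V (X (k + 1) ω) ∂P = ∫⁻ ω, ∫⁻ b, V (F (X k ω) b) ∂μ ∂P := by
        simp only [hrec, ← hlaw k]
        exact (indepFun_of_recursion hF hX0 hrec hW hind k).lintegral_comp_eq hXk (hW k)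
          (f := fun x b => V (F x b)) (hV.comp hF)
    _ ≤ ∫⁻ ω, r * V (X k ω) ∂P := lintegral_mono fun ω => hcontr _
    _ = r * ∫⁻ ω, V (X k ω) ∂P := lintegral_const_mul r (hV.comp hXk)

end ProbabilityTheory

namespace MeasureTheory

variable {Ω : Type*} [MeasurableSpace Ω] {P : Measure Ω}

theorem ae_tendsto_zero_of_lintegral_succ_le {f : ℕ → Ω → ℝ≥0∞} (hf : ∀ k, Measurable (f k))
    {r : ℝ≥0∞} (hr : r < 1) (h0 : ∫⁻ ω, f 0 ω ∂P ≠ ∞)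
    (hstep : ∀ k, ∫⁻ ω, f (k + 1) ω ∂P ≤ r * ∫⁻ ω, f k ω ∂P) :
    ∀ᵐ ω ∂P, Tendsto (fun k => f k ω) atTop (𝓝 0) := by
  have hgeom : ∀ k, ∫⁻ ω, f k ω ∂P ≤ r ^ k * ∫⁻ ω, f 0 ω ∂P := by
    intro k
    induction k with
    | zero => simp
    | succ k ih =>
      calc ∫⁻ ω, f (k + 1) ω ∂P ≤ r * ∫⁻ ω, f k ω ∂P := hstep k
        _ ≤ r * (r ^ k * ∫⁻ ω, f 0 ω ∂P) := by gcongr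
        _ = r ^ (k + 1) * ∫⁻ ω, f 0 ω ∂P := by ring
  have hsum : ∫⁻ ω, ∑' k, f k ω ∂P ≠ ∞ := by
    rw [lintegral_tsum fun k => (hf k).aemeasurable]
    refine ne_top_of_le_ne_top ?_ (ENNReal.tsum_le_tsum hgeom)
    rw [ENNReal.tsum_mul_right, ENNReal.tsum_geometric]
    exact ENNReal.mul_ne_top (ENNReal.inv_ne_top.2 (tsub_pos_of_lt hr).ne') h0
  filter_upwards [ae_lt_top (Measurable.tsum hf) hsum] with ω hω
  exact ENNReal.tendsto_atTop_zero_of_tsum_ne_top hω.ne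

end MeasureTheory

theorem exists_pos_mul_norm_sq_le {E : Type*} [NormedAddCommGroup E] [NormedSpace ℝ E]
    [ProperSpace E] {S : Set E} (hS : IsClosed S) (hSsmul : ∀ (a : ℝ), ∀ u ∈ S, a • u ∈ S)
    {Q : E → ℝ} (hQ : Continuous Q) (hQsmul : ∀ (a : ℝ) u, Q (a • u) = a ^ 2 * Q u)
    (hQpos : ∀ u ∈ S, u ≠ 0 → 0 < Q u) :
    ∃ lam > 0, ∀ u ∈ S, lam * ‖u‖ ^ 2 ≤ Q u := by
  set K := S ∩ Metric.sphere 0 1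
  have hK : IsCompact K := (isCompact_sphere 0 1).inter_left hS
  have hnormalize : ∀ u ∈ S, u ≠ 0 → ‖u‖⁻¹ • u ∈ K := fun u hu hu0 =>
    ⟨hSsmul _ u hu, by simp [norm_smul, hu0]⟩
  have hscale : ∀ u, u ≠ 0 → Q u = ‖u‖ ^ 2 * Q (‖u‖⁻¹ • u) := by
    intro u hu0
    rw [hQsmul, ← mul_assoc, ← mul_pow, mul_inv_cancel₀ (norm_ne_zero_iff.2 hu0), one_pow,
      one_mul]
  have hQ0 : Q 0 = 0 := by simpa using hQsmul 0 0
  rcases K.eq_empty_or_nonempty with hKe | hKne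
  · refine ⟨1, one_pos, fun u hu => ?_⟩
    by_cases hu0 : u = 0
    · simp [hu0, hQ0]
    · simpa [hKe] using hnormalize u hu hu0
  · obtain ⟨w, hwK, hwmin⟩ := hK.exists_isMinOn hKne hQ.continuousOn
    refine ⟨Q w, hQpos w hwK.1 (by rintro rfl; simpa using hwK.2), fun u hu => ?_⟩
    by_cases hu0 : u = 0
    · simp [hu0, hQ0]
    · rw [hscale u hu0, mul_comm]
      exact mul_le_mul_of_nonneg_left (hwmin (hnormalize u hu hu0)) (sq_nonneg _)

theorem apply_eq_of_isPath {α : Type*} {n : ℕ} {E : Fin n → Fin n → Prop} {w : Fin n → α}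
    (hE : ∀ a b, E a b → w a = w b) {i j : Fin n} {L : ℕ} (h : isPath E i j L) : w i = w j := by
  obtain ⟨f, rfl, rfl, hf⟩ := h
  have : ∀ l ≤ L, w (f 0) = w (f l) := by
    intro l hl
    induction l with
    | zero => rfl
    | succ l ih => rw [ih (by omega)]; exact hE _ _ (hf l (by omega))
  exact this L le_rfl

section Dirichlet

variable {n : ℕ} {q : Fin n → Fin n → ℝ}

def dirichletForm (q : Fin n → Fin n → ℝ) (u : Fin n → ℝ) : ℝ :=
  ∑ i, ∑ j, q i j * (u i - u j) ^ 2

theorem dirichletForm_nonneg (hq : ∀ i j, 0 ≤ q i j) (u : Fin n → ℝ) : 0 ≤ dirichletForm q u :=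
  Finset.sum_nonneg fun i _ => Finset.sum_nonneg fun j _ => mul_nonneg (hq i j) (sq_nonneg _)

theorem dirichletForm_smul (a : ℝ) (u : Fin n → ℝ) :
    dirichletForm q (a • u) = a ^ 2 * dirichletForm q u := by
  simp only [dirichletForm, Finset.mul_sum, Pi.smul_apply, smul_eq_mul]
  congr! 2
  ring

theorem dirichletForm_sub_const (u : Fin n → ℝ) (c : ℝ) :
    dirichletForm q (fun k => u k - c) = dirichletForm q u := by
  simp [dirichletForm]

theorem continuous_dirichletForm : Continuous (dirichletForm q) := by
  unfold dirichletForm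
  fun_prop

theorem apply_eq_of_dirichletForm_eq_zero (hq : ∀ i j, 0 ≤ q i j) {u : Fin n → ℝ}
    (hu : dirichletForm q u = 0) {i j : Fin n} (hij : 0 < q i j) : u i = u j := by
  have hterm := (Finset.sum_eq_zero_iff_of_nonneg fun j _ => mul_nonneg (hq i j) (sq_nonneg _)).1
    ((Finset.sum_eq_zero_iff_of_nonneg fun i _ => Finset.sum_nonneg fun j _ =>
      mul_nonneg (hq i j) (sq_nonneg _)).1 hu i (Finset.mem_univ i)) j (Finset.mem_univ j)
  rw [mul_eq_zero, pow_eq_zero_iff two_ne_zero, sub_eq_zero] at hterm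
  exact hterm.resolve_left hij.ne'

theorem dirichletForm_pos (hq : ∀ i j, 0 ≤ q i j)
    (hconn : ∀ i j : Fin n, ∃ L, isPath (fun a b => 0 < q a b) i j L) {u : Fin n → ℝ}
    (hsum : ∑ k, u k = 0) (hu : u ≠ 0) : 0 < dirichletForm q u := by
  refine (dirichletForm_nonneg hq u).lt_of_ne fun h0 => hu ?_
  have hconst : ∀ i j, u i = u j := fun i j =>
    (hconn i j).elim fun _ =>
      apply_eq_of_isPath fun _ _ hab => apply_eq_of_dirichletForm_eq_zero hq h0.symm hab
  ext i
  have : (n : ℝ) * u i = 0 := by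
    simpa [← hconst i, Finset.sum_const] using hsum
  simpa [(Fin.pos i).ne'] using this

theorem exists_pos_mul_sum_sq_le_dirichletForm (hq : ∀ i j, 0 ≤ q i j)
    (hconn : ∀ i j : Fin n, ∃ L, isPath (fun a b => 0 < q a b) i j L) :
    ∃ lam > 0, ∀ u : Fin n → ℝ, ∑ k, u k = 0 → lam * ∑ k, u k ^ 2 ≤ dirichletForm q u := by
  -- in the Euclidean norm, `‖u‖ ^ 2 = ∑ k, u k ^ 2`
  obtain ⟨lam, hlam, h⟩ := exists_pos_mul_norm_sq_le (E := EuclideanSpace ℝ (Fin n))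
    (S := {u | ∑ k, u k = 0}) (Q := fun u => dirichletForm q u)
    (isClosed_eq (by fun_prop) continuous_const)
    (fun a u hu => by simp [← Finset.mul_sum, hu.out])
    (continuous_dirichletForm.comp (PiLp.continuous_ofLp 2 _))
    (fun a u => dirichletForm_smul a u)
    (fun u hu hu0 => dirichletForm_pos hq hconn hu (by simpa using hu0))
  refine ⟨lam, hlam, fun u hu => ?_⟩
  simpa [EuclideanSpace.real_norm_sq_eq] using h (WithLp.toLp 2 u) hu

end Dirichlet

instance inst_s4 {n : ℕ} : MeasurableSingletonClass (Matrix (Fin n) (Fin n) ℝ) :=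
  Pi.instMeasurableSingletonClass

theorem measurable_uncurry_mulVec {n : ℕ} :
    Measurable (Function.uncurry fun (v : Fin n → ℝ) (M : Matrix (Fin n) (Fin n) ℝ) => M *ᵥ v) := by
  unfold Function.uncurry Matrix.mulVec dotProduct
  fun_prop

section Averaging

variable {n : ℕ}

theorem eVec_eq_single (i : Fin n) : eVec i = Pi.single i 1 := by
  ext k
  simp [eVec, Pi.single_apply]

theorem Amat_mulVec (i j : Fin n) (v : Fin n → ℝ) :
    Amat i j *ᵥ v = v - ((v i - v j) / 2) • (eVec i - eVec j) := by
  have hdot : (eVec i - eVec j) ⬝ᵥ v = v i - v j := by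
    simp [eVec_eq_single, sub_dotProduct, single_dotProduct]
  rw [Amat, sub_mulVec, one_mulVec, smul_mulVec, vecMulVec_mulVec, hdot, op_smul_eq_smul,
    smul_smul]
  ext k
  simp only [Pi.sub_apply, Pi.smul_apply, smul_eq_mul]
  ring

theorem one_vecMul_Amat (i j : Fin n) : (1 : Fin n → ℝ) ᵥ* Amat i j = 1 := by
  have h : (1 : Fin n → ℝ) ⬝ᵥ (eVec i - eVec j) = 0 := by
    simp [eVec_eq_single, dotProduct_sub, dotProduct_single]
  simp [Amat, vecMul_sub, vecMul_smul, vecMul_vecMulVec, h]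

theorem sum_mulVec_of_one_vecMul {M : Matrix (Fin n) (Fin n) ℝ} (hM : (1 : Fin n → ℝ) ᵥ* M = 1)
    (v : Fin n → ℝ) : ∑ k, (M *ᵥ v) k = ∑ k, v k := by
  rw [← one_dotProduct, dotProduct_mulVec, hM, one_dotProduct]

theorem sum_sq_sub_Amat_mulVec (i j : Fin n) (v : Fin n → ℝ) (c : ℝ) :
    ∑ k, ((Amat i j *ᵥ v) k - c) ^ 2 = ∑ k, (v k - c) ^ 2 - (v i - v j) ^ 2 / 2 := by
  rcases eq_or_ne i j with rfl | hij
  · simp [Amat_mulVec]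
  have hcross : ∑ k, (eVec i k - eVec j k) * (v k - c) = v i - v j := by
    simp [eVec, sub_mul, Finset.sum_sub_distrib]
  have hsq : ∑ k, (eVec i k - eVec j k) ^ 2 = 2 := by
    norm_num [eVec, sub_sq, Finset.sum_add_distrib, Finset.sum_sub_distrib, hij.symm]
  calc ∑ k, ((Amat i j *ᵥ v) k - c) ^ 2
      = ∑ k, ((v k - c) ^ 2 - (v i - v j) * ((eVec i k - eVec j k) * (v k - c))
          + ((v i - v j) / 2) ^ 2 * (eVec i k - eVec j k) ^ 2) := by
        simp only [Amat_mulVec]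
        congr! 1 with k
        simp only [Pi.sub_apply, Pi.smul_apply, smul_eq_mul]
        ring
    _ = ∑ k, (v k - c) ^ 2 - (v i - v j) ^ 2 / 2 := by
        rw [Finset.sum_add_distrib, Finset.sum_sub_distrib, ← Finset.mul_sum, ← Finset.mul_sum,
          hcross, hsq]
        ring

end Averaging

section NoForcefulAgents

variable {n : ℕ} {p β γ : Fin n → Fin n → ℝ} {ε : ℝ}

theorem sum_sub_mean_eq_zero [NeZero n] (v : Fin n → ℝ) : ∑ k, (v k - (∑ l, v l) / n) = 0 := by
  rw [Finset.sum_sub_distrib, Finset.sum_const, Finset.card_univ, Fintype.card_fin, nsmul_eq_mul,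
    mul_div_cancel₀ _ (Nat.cast_ne_zero.2 (NeZero.ne n)), sub_self]

def disagreement (v : Fin n → ℝ) : ℝ :=
  ∑ k, (v k - (∑ l, v l) / n) ^ 2

theorem measurable_disagreement : Measurable (disagreement (n := n)) := by
  unfold disagreement
  fun_prop

theorem disagreement_nonneg (v : Fin n → ℝ) : 0 ≤ disagreement v :=
  Finset.sum_nonneg fun _ _ => sq_nonneg _

theorem disagreement_Amat_mulVec (i j : Fin n) (v : Fin n → ℝ) :
    disagreement (Amat i j *ᵥ v) = disagreement v - (v i - v j) ^ 2 / 2 := by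
  rw [disagreement, sum_mulVec_of_one_vecMul (one_vecMul_Amat i j), sum_sq_sub_Amat_mulVec,
    disagreement]

theorem ae_one_vecMul_lawW :
    ∀ᵐ M ∂lawW p 0 β γ ε, (1 : Fin n → ℝ) ᵥ* M = 1 := by
  rw [ae_iff]
  simp [lawW, Measure.finsetSum_apply, Measure.dirac_apply, one_vecMul_Amat]

theorem lintegral_ofReal_lawW (hp : ∀ i j, 0 ≤ p i j) (hβ : ∀ i j, 0 ≤ β i j)
    (hγ : ∀ i j, 0 ≤ γ i j) {g : Matrix (Fin n) (Fin n) ℝ → ℝ} (hg : ∀ M, 0 ≤ g M) :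
    ∫⁻ M, ENNReal.ofReal (g M) ∂lawW p 0 β γ ε
      = ENNReal.ofReal
          (∑ i, ∑ j, (p i j * β i j / n * g (Amat i j) + p i j * γ i j / n * g 1)) := by
  have hA : ∀ i j, 0 ≤ p i j * β i j / n := fun i j => by have := hp i j; have := hβ i j; positivity
  have hI : ∀ i j, 0 ≤ p i j * γ i j / n := fun i j => by have := hp i j; have := hγ i j; positivity
  have hterm : ∀ i j, 0 ≤ p i j * β i j / n * g (Amat i j) + p i j * γ i j / n * g 1 :=
    fun i j => add_nonneg (mul_nonneg (hA i j) (hg _)) (mul_nonneg (hI i j) (hg _))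
  simp only [lawW, lintegral_finsetSum_measure, lintegral_add_measure, lintegral_smul_measure,
    lintegral_dirac, ENNReal.ofReal_sum_of_nonneg fun i _ => Finset.sum_nonneg fun j _ => hterm i j,
    ENNReal.ofReal_sum_of_nonneg fun j _ => hterm _ j]
  refine Finset.sum_congr rfl fun i _ => Finset.sum_congr rfl fun j _ => ?_
  rw [ENNReal.ofReal_add (mul_nonneg (hA i j) (hg _)) (mul_nonneg (hI i j) (hg _)),
    ENNReal.ofReal_mul (hA i j), ENNReal.ofReal_mul (hI i j)]
  simp

theorem lintegral_disagreement_mulVec_lawW [NeZero n] (hp : ∀ i j, 0 ≤ p i j)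
    (hp_row : ∀ i, ∑ j, p i j = 1) (hβ : ∀ i j, 0 ≤ β i j) (hγ : ∀ i j, 0 ≤ γ i j)
    (hβγ : ∀ i j, β i j + γ i j = 1) (v : Fin n → ℝ) :
    ∫⁻ M, ENNReal.ofReal (disagreement (M *ᵥ v)) ∂lawW p 0 β γ ε
      = ENNReal.ofReal (disagreement v - dirichletForm (fun i j => p i j * β i j) v / (2 * n)) := by
  rw [lintegral_ofReal_lawW hp hβ hγ fun M => disagreement_nonneg _]
  congr 1
  have hterm : ∀ i j, p i j * β i j / n * disagreement (Amat i j *ᵥ v)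
      + p i j * γ i j / n * disagreement (1 *ᵥ v)
      = p i j * disagreement v / n - p i j * β i j * (v i - v j) ^ 2 / (2 * n) := fun i j => by
    rw [disagreement_Amat_mulVec, one_mulVec]
    field_simp [(Nat.cast_ne_zero.2 (NeZero.ne n) : (n : ℝ) ≠ 0)]
    linear_combination (2 * p i j * disagreement v) * hβγ i j
  simp only [hterm, Finset.sum_sub_distrib, ← Finset.sum_div, ← Finset.sum_mul, hp_row,
    Finset.sum_const, Finset.card_univ, Fintype.card_fin, nsmul_one, dirichletForm]
  rw [mul_div_cancel_left₀ _ (Nat.cast_ne_zero.2 (NeZero.ne n))]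

theorem exists_lintegral_disagreement_lawW_le [NeZero n] (hp : ∀ i j, 0 ≤ p i j)
    (hp_row : ∀ i, ∑ j, p i j = 1) (hconn : ∀ i j : Fin n, ∃ L, isPath (fun a b => 0 < p a b) i j L)
    (hβ : ∀ i j, 0 ≤ β i j) (hγ : ∀ i j, 0 ≤ γ i j) (hβγ : ∀ i j, β i j + γ i j = 1)
    (hint : ∀ i j, 0 < p i j → 0 < β i j) :
    ∃ r < 1, ∀ v : Fin n → ℝ, ∫⁻ M, ENNReal.ofReal (disagreement (M *ᵥ v)) ∂lawW p 0 β γ ε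
      ≤ r * ENNReal.ofReal (disagreement v) := by
  have hconn' : ∀ i j : Fin n, ∃ L, isPath (fun a b => 0 < p a b * β a b) i j L := fun i j =>
    (hconn i j).imp fun _ ⟨f, hf0, hfL, hf⟩ =>
      ⟨f, hf0, hfL, fun l hl => mul_pos (hf l hl) (hint _ _ (hf l hl))⟩
  obtain ⟨lam, hlam, hgap⟩ :=
    exists_pos_mul_sum_sq_le_dirichletForm (fun i j => mul_nonneg (hp i j) (hβ i j)) hconn'
  have hn : (0 : ℝ) < n := Nat.cast_pos.2 (NeZero.pos n)
  refine ⟨ENNReal.ofReal (1 - lam / (2 * n)), ?_, fun v => ?_⟩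
  · rw [ENNReal.ofReal_lt_one]
    linarith [div_pos hlam (mul_pos two_pos hn)]
  · rw [lintegral_disagreement_mulVec_lawW hp hp_row hβ hγ hβγ,
      ← ENNReal.ofReal_mul' (disagreement_nonneg v)]
    refine ENNReal.ofReal_le_ofReal ?_
    have hv := hgap _ (sum_sub_mean_eq_zero v)
    rw [dirichletForm_sub_const] at hv
    change lam * disagreement v ≤ _ at hv
    have := div_le_div_of_nonneg_right hv (mul_pos two_pos hn).le
    linear_combination this

theorem tendsto_apply_of_tendsto_disagreement {u : ℕ → Fin n → ℝ} {s : ℝ}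
    (hsum : ∀ k, ∑ l, u k l = s) (h : Tendsto (fun k => disagreement (u k)) atTop (𝓝 0))
    (i : Fin n) : Tendsto (fun k => u k i) atTop (𝓝 (s / n)) := by
  have hle : ∀ k, (u k i - s / n) ^ 2 ≤ disagreement (u k) := fun k => by
    rw [disagreement, hsum k]
    exact Finset.single_le_sum (f := fun l => (u k l - s / n) ^ 2) (fun _ _ => sq_nonneg _)
      (Finset.mem_univ i)
  have hsq := squeeze_zero (fun _ => sq_nonneg _) hle h
  rw [← tendsto_sub_nhds_zero_iff, tendsto_zero_iff_abs_tendsto_zero]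
  simpa [Function.comp_def, Real.sqrt_sq_eq_abs] using hsq.sqrt

end NoForcefulAgents

theorem stmt_4_general {n : ℕ}
    (p α β γ : Fin n → Fin n → ℝ)
    (hp_nonneg : ∀ i j, 0 ≤ p i j) (hp_row : ∀ i, ∑ j, p i j = 1)
    (hconn : ∀ i j : Fin n, ∃ L, isPath (fun a b => 0 < p a b) i j L)
    (hβ : ∀ i j, 0 ≤ β i j) (hγ : ∀ i j, 0 ≤ γ i j)
    (habg : ∀ i j, α i j + β i j + γ i j = 1)
    (hint : ∀ i j, 0 < p i j → 0 < β i j + α i j)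
    (ε : ℝ)
    {Ω : Type*} [MeasureSpace Ω] [IsProbabilityMeasure (ℙ : Measure Ω)]
    (W : ℕ → Ω → Matrix (Fin n) (Fin n) ℝ)
    (hWmeas : ∀ k, Measurable (W k))
    (hWlaw : ∀ k, Measure.map (W k) ℙ = lawW p α β γ ε)
    (hWindep : iIndepFun (m := fun _ => matMeas) W ℙ)
    (x0 : Fin n → ℝ) (x : ℕ → Ω → Fin n → ℝ)
    (hx0 : ∀ ω, x 0 ω = x0)
    (hxrec : ∀ k ω, x (k + 1) ω = (W k ω).mulVec (x k ω))
    -- no forceful agents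
    (hnoforce : ∀ i j, α i j = 0) :
    ∀ᵐ ω ∂(ℙ : Measure Ω),
      ∀ i, Tendsto (fun k => x k ω i) atTop (nhds ((∑ j, x0 j) / n)) := by
  rcases n.eq_zero_or_pos with rfl | hn
  · exact ae_of_all _ fun _ i => i.elim0
  have : NeZero n := ⟨hn.ne'⟩
  obtain rfl : α = 0 := funext₂ hnoforce
  have hD : Measurable fun v : Fin n → ℝ => ENNReal.ofReal (disagreement v) :=
    measurable_disagreement.ennreal_ofReal
  obtain ⟨r, hr, hcontr⟩ := exists_lintegral_disagreement_lawW_le (ε := ε) hp_nonneg hp_row hconn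
    hβ hγ (fun i j => by simpa using habg i j) (fun i j h => by simpa using hint i j h)
  have hdis : ∀ᵐ ω, Tendsto (fun k => ENNReal.ofReal (disagreement (x k ω))) atTop (𝓝 0) :=
    ae_tendsto_zero_of_lintegral_succ_le
      (fun k => hD.comp (measurable_of_recursion measurable_uncurry_mulVec hx0 hxrec hWmeas k))
      hr (by simp [hx0])
      (lintegral_succ_le_of_recursion measurable_uncurry_mulVec hx0 hxrec hWmeas hWindep hWlaw hD
        hcontr)
  have hcols : ∀ᵐ ω, ∀ k, (1 : Fin n → ℝ) ᵥ* W k ω = 1 :=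
    ae_all_iff.2 fun k => ae_of_ae_map (hWmeas k).aemeasurable (hWlaw k ▸ ae_one_vecMul_lawW)
  filter_upwards [hdis, hcols] with ω hω hcolsω
  have hsum : ∀ k, ∑ l, x k ω l = ∑ l, x0 l := by
    intro k
    induction k with
    | zero => rw [hx0]
    | succ k ih => rw [hxrec, sum_mulVec_of_one_vecMul (hcolsω k), ih]
  refine tendsto_apply_of_tendsto_disagreement hsum ?_
  rw [← ENNReal.tendsto_toReal_zero_iff] at hω
  simpa only [ENNReal.toReal_ofReal (disagreement_nonneg _)] using hω

/-- Corollary 1: under Assumptions 1–3 and with no forceful agents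
(`α_ij = 0` for all `i, j`), the beliefs of all agents converge with
probability one to the average of the initial beliefs. -/
theorem stmt_4 {n : ℕ} (hn : 2 ≤ n)
    (p α β γ : Fin n → Fin n → ℝ)
    (hp_diag : ∀ i, p i i = 0) (hp_nonneg : ∀ i j, 0 ≤ p i j) (hp_row : ∀ i, ∑ j, p i j = 1)
    (hconn : ∀ i j : Fin n, ∃ L, isPath (fun a b => 0 < p a b) i j L)
    (hα : ∀ i j, 0 ≤ α i j) (hβ : ∀ i j, 0 ≤ β i j) (hγ : ∀ i j, 0 ≤ γ i j)
    (habg : ∀ i j, α i j + β i j + γ i j = 1)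
    (hint : ∀ i j, 0 < p i j → 0 < β i j + α i j)
    (ε : ℝ) (hε0 : 0 < ε) (hε : ε ≤ 1 / 2)
    {Ω : Type*} [MeasureSpace Ω] [IsProbabilityMeasure (ℙ : Measure Ω)]
    (W : ℕ → Ω → Matrix (Fin n) (Fin n) ℝ)
    (hWmeas : ∀ k, Measurable (W k))
    (hWlaw : ∀ k, Measure.map (W k) ℙ = lawW p α β γ ε)
    (hWindep : iIndepFun (m := fun _ => matMeas) W ℙ)
    (x0 : Fin n → ℝ) (x : ℕ → Ω → Fin n → ℝ)
    (hx0 : ∀ ω, x 0 ω = x0)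
    (hxrec : ∀ k ω, x (k + 1) ω = (W k ω).mulVec (x k ω))
    -- no forceful agents
    (hnoforce : ∀ i j, α i j = 0) :
    ∀ᵐ ω ∂(ℙ : Measure Ω),
      ∀ i, Tendsto (fun k => x k ω i) atTop (nhds ((∑ j, x0 j) / n)) :=
  stmt_4_general p α β γ hp_nonneg hp_row hconn hβ hγ habg hint ε W hWmeas hWlaw hWindep x0 x hx0
    hxrec hnoforce
end
end

section
/- Let T be a symmetric doubly stochastic primitive n×n matrix and consider the Markov chain with transition matrix T. Let {i,j} be an essential edge of the social network graph induced by T, partitioning the nodes into N(i,j) ∋ i and N(j,i) ∋ j. Then: (a) the mean first passage time from i to j equals m_ij = |N(i,j)|/T_ij; and (b) for every k ∈ N(j,i), m_ik − m_jk = m_ij. -/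
open Matrix

noncomputable section

/-- the fundamental matrix `Y = Σ_{k=0}^∞ (T^k − T^∞)` of a doubly stochastic
Markov chain, whose limit matrix `T^∞` has all entries `1/n`. -/
def fundY {n : ℕ} (T : Matrix (Fin n) (Fin n) ℝ) : Matrix (Fin n) (Fin n) ℝ :=
  Matrix.of fun i j => ∑' k : ℕ, ((T ^ k) i j - 1 / n)

/-- the mean first passage time `m_ij = n (Y_jj − Y_ij)` from state `i` to
state `j` of a doubly stochastic Markov chain with transition matrix `T`. -/
def mfp {n : ℕ} (T : Matrix (Fin n) (Fin n) ℝ) (i j : Fin n) : ℝ :=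
  n * (fundY T j j - fundY T i j)

lemma osc_contract {n : ℕ} (S : Matrix (Fin n) (Fin n) ℝ) (δ : ℝ)
    (hδ : ∀ a b, δ ≤ S a b) (hrowS : ∀ a, ∑ b, S a b = 1)
    (v : Fin n → ℝ) (M mlow : ℝ) (hM : ∀ l, v l ≤ M) (hm : ∀ l, mlow ≤ v l)
    (hMm : mlow ≤ M) (r s : Fin n) :
    S.mulVec v r - S.mulVec v s ≤ (1 - n * δ) * (M - mlow) := by
  have expand : S.mulVec v r - S.mulVec v s = ∑ l, (S r l - S s l) * (v l - mlow) := by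
    simp only [Matrix.mulVec, dotProduct, sub_mul, mul_sub, Finset.sum_sub_distrib,
      ← Finset.sum_mul, hrowS]
    ring
  rw [expand]
  have step1 : ∑ l, (S r l - S s l) * (v l - mlow) ≤
      ∑ l, (S r l - min (S r l) (S s l)) * (M - mlow) := by
    apply Finset.sum_le_sum
    intro l _
    rcases le_total (S s l) (S r l) with h | h
    · rw [min_eq_right h]
      exact mul_le_mul_of_nonneg_left (by linarith [hM l]) (by linarith)
    · rw [min_eq_left h]
      have h1 : (S r l - S s l) * (v l - mlow) ≤ 0 :=
        mul_nonpos_of_nonpos_of_nonneg (by linarith) (by linarith [hm l])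
      simpa using h1
  have step2 : ∑ l, (S r l - min (S r l) (S s l)) * (M - mlow) ≤ (1 - n * δ) * (M - mlow) := by
    rw [← Finset.sum_mul]
    apply mul_le_mul_of_nonneg_right _ (by linarith)
    have hmin : (n : ℝ) * δ ≤ ∑ l, min (S r l) (S s l) := by
      have : ∑ _l : Fin n, δ ≤ ∑ l, min (S r l) (S s l) :=
        Finset.sum_le_sum fun l _ => le_min (hδ r l) (hδ s l)
      simpa [Finset.sum_const, nsmul_eq_mul] using this
    have h2 : ∑ l, (S r l - min (S r l) (S s l)) = 1 - ∑ l, min (S r l) (S s l) := by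
      rw [Finset.sum_sub_distrib, hrowS]
    linarith
  linarith

lemma pow_nonneg_row {n : ℕ} (T : Matrix (Fin n) (Fin n) ℝ)
    (hnonneg : ∀ i j, 0 ≤ T i j) (hrow : ∀ i, ∑ j, T i j = 1) (k : ℕ) :
    (∀ a b, 0 ≤ (T ^ k) a b) ∧ (∀ a, ∑ b, (T ^ k) a b = 1) := by
  induction k with
  | zero => constructor
            · intro a b; simp [Matrix.one_apply]; positivity
            · intro a; simp [Matrix.one_apply]
  | succ k ih =>
    have hmul : ∀ a b, (T ^ (k+1)) a b = ∑ l, (T ^ k) a l * T l b := by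
      intro a b; rw [pow_succ, Matrix.mul_apply]
    constructor
    · intro a b; rw [hmul]
      exact Finset.sum_nonneg fun l _ => mul_nonneg (ih.1 a l) (hnonneg l b)
    · intro a
      simp only [hmul]
      rw [Finset.sum_comm]
      calc ∑ l, ∑ b, (T ^ k) a l * T l b = ∑ l, (T ^ k) a l * ∑ b, T l b := by
            simp [Finset.mul_sum]
        _ = 1 := by simp [hrow, ih.2 a]

lemma pow_osc {n : ℕ} (T : Matrix (Fin n) (Fin n) ℝ)
    (hnonneg : ∀ i j, 0 ≤ T i j) (hrow : ∀ i, ∑ j, T i j = 1)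
    (m : ℕ) (hm : 0 < m) (δ : ℝ) (hδ : ∀ a b, δ ≤ (T ^ m) a b) :
    ∀ k b r s, (T ^ k) r b - (T ^ k) s b ≤ (1 - n * δ) ^ (k / m) := by
  have hnn := fun k => (pow_nonneg_row T hnonneg hrow k).1
  have hrw := fun k => (pow_nonneg_row T hnonneg hrow k).2
  intro k
  induction k using Nat.strong_induction_on with
  | _ k IH =>
  intro b r s
  have hθ0 : 0 ≤ 1 - (n : ℝ) * δ := by
    have h1 : ∑ _l : Fin n, δ ≤ ∑ l, (T ^ m) r l := Finset.sum_le_sum fun l _ => hδ r l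
    have := hrw m r
    simp only [Finset.sum_const, nsmul_eq_mul, Finset.card_univ, Fintype.card_fin] at h1
    linarith
  rcases lt_or_ge k m with hk | hk
  · have hdiv : k / m = 0 := Nat.div_eq_of_lt hk
    rw [hdiv, pow_zero]
    have h1 : (T ^ k) r b ≤ 1 := by
      have := hrw k r
      have h2 : (T ^ k) r b ≤ ∑ l, (T ^ k) r l :=
        Finset.single_le_sum (fun l _ => hnn k r l) (Finset.mem_univ b)
      linarith
    linarith [hnn k s b]
  · -- k ≥ m
    set w : Fin n → ℝ := fun l => (T ^ (k - m)) l b with hw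
    obtain ⟨rmax, _, hrmax⟩ := Finset.exists_max_image Finset.univ w ⟨r, Finset.mem_univ r⟩
    obtain ⟨rmin, _, hrmin⟩ := Finset.exists_min_image Finset.univ w ⟨r, Finset.mem_univ r⟩
    have hentry : ∀ a, (T ^ k) a b = (T ^ m).mulVec w a := by
      intro a
      have : T ^ k = T ^ m * T ^ (k - m) := by
        rw [← pow_add]; congr 1; omega
      rw [this, Matrix.mul_apply]
      rfl
    have hcon := osc_contract (T ^ m) δ hδ (hrw m) w (w rmax) (w rmin)
      (fun l => hrmax l (Finset.mem_univ l)) (fun l => hrmin l (Finset.mem_univ l))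
      (hrmin rmax (Finset.mem_univ rmax)) r s
    have hIH : w rmax - w rmin ≤ (1 - n * δ) ^ ((k - m) / m) :=
      IH (k - m) (by omega) b rmax rmin
    have hdiv : k / m = (k - m) / m + 1 := by
      rw [Nat.div_eq_sub_div hm hk]
    rw [hdiv, pow_succ, hentry r, hentry s]
    calc (T ^ m).mulVec w r - (T ^ m).mulVec w s ≤ (1 - n * δ) * (w rmax - w rmin) := hcon
      _ ≤ (1 - n * δ) * (1 - n * δ) ^ ((k - m) / m) := mul_le_mul_of_nonneg_left hIH hθ0
      _ = (1 - n * δ) ^ ((k - m) / m) * (1 - n * δ) := mul_comm _ _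

lemma pow_entry_abs {n : ℕ} (T : Matrix (Fin n) (Fin n) ℝ)
    (hsym : ∀ i j, T i j = T j i)
    (hnonneg : ∀ i j, 0 ≤ T i j) (hrow : ∀ i, ∑ j, T i j = 1)
    (m : ℕ) (hm : 0 < m) (δ : ℝ) (hδ : ∀ a b, δ ≤ (T ^ m) a b) :
    ∀ k a b, |(T ^ k) a b - 1 / n| ≤ (1 - n * δ) ^ (k / m) := by
  intro k a b
  have hn : 0 < n := by
    rcases Nat.eq_zero_or_pos n with h | h
    · exact absurd a.2 (by omega)
    · exact h
  have hsymk : ∀ c d, (T ^ k) c d = (T ^ k) d c := by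
    intro c d
    have hT : Tᵀ = T := by ext x y; exact hsym y x
    have : (T ^ k)ᵀ = T ^ k := by rw [Matrix.transpose_pow, hT]
    conv_lhs => rw [← this]
    rfl
  have hcol : ∑ c, (T ^ k) c b = 1 := by
    calc ∑ c, (T ^ k) c b = ∑ c, (T ^ k) b c := Finset.sum_congr rfl fun c _ => hsymk c b
      _ = 1 := (pow_nonneg_row T hnonneg hrow k).2 b
  set w : Fin n → ℝ := fun c => (T ^ k) c b with hw
  obtain ⟨rmax, _, hrmax⟩ := Finset.exists_max_image Finset.univ w ⟨a, Finset.mem_univ a⟩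
  obtain ⟨rmin, _, hrmin⟩ := Finset.exists_min_image Finset.univ w ⟨a, Finset.mem_univ a⟩
  have hmin : w rmin ≤ 1 / n := by
    have h1 : ∑ _c : Fin n, w rmin ≤ ∑ c, w c :=
      Finset.sum_le_sum fun c _ => hrmin c (Finset.mem_univ c)
    simp only [Finset.sum_const, nsmul_eq_mul, Finset.card_univ, Fintype.card_fin] at h1
    rw [hcol] at h1
    rw [le_div_iff₀ (by positivity : (0:ℝ) < n)]
    linarith
  have hmax : 1 / n ≤ w rmax := by
    have h1 : ∑ c, w c ≤ ∑ _c : Fin n, w rmax :=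
      Finset.sum_le_sum fun c _ => hrmax c (Finset.mem_univ c)
    simp only [Finset.sum_const, nsmul_eq_mul, Finset.card_univ, Fintype.card_fin] at h1
    rw [hcol] at h1
    rw [div_le_iff₀ (by positivity : (0:ℝ) < n)]
    linarith
  have hosc := pow_osc T hnonneg hrow m hm δ hδ k b
  rw [abs_le]
  constructor
  · have := hosc rmax a
    have : w rmax - w a ≤ (1 - n * δ) ^ (k / m) := this
    simp only [hw] at *
    linarith
  · have := hosc a rmin
    have : w a - w rmin ≤ (1 - n * δ) ^ (k / m) := this
    simp only [hw] at *
    linarith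

lemma summable_pow_div {m : ℕ} [NeZero m] {θ : ℝ} (h0 : 0 ≤ θ) (h1 : θ < 1) :
    Summable fun k : ℕ => θ ^ (k / m) := by
  rw [← (Nat.divModEquiv m).symm.summable_iff]
  have key : ∀ p : ℕ × Fin m, ((fun k : ℕ => θ ^ (k / m)) ∘ (Nat.divModEquiv m).symm) p = θ ^ p.1 := by
    intro p
    have h : (p.1 * m + (p.2 : ℕ)) / m = p.1 := by
      rw [Nat.mul_comm, Nat.mul_add_div (NeZero.pos m), Nat.div_eq_of_lt p.2.2, Nat.add_zero]
    simp [Function.comp, Nat.divModEquiv, h]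
  rw [summable_congr key]
  apply (summable_prod_of_nonneg (by intro p; positivity)).mpr
  constructor
  · intro q; exact summable_of_finite_support (Set.toFinite _)
  · have : ∀ q : ℕ, ∑' _ : Fin m, θ ^ q = (m : ℝ) * θ ^ q := by
      intro q; rw [tsum_fintype]; simp [Finset.sum_const, nsmul_eq_mul]
    rw [summable_congr this]
    exact (summable_geometric_of_lt_one h0 h1).mul_left _

lemma entry_summable {n : ℕ} (T : Matrix (Fin n) (Fin n) ℝ)
    (hsym : ∀ i j, T i j = T j i) (hnonneg : ∀ i j, 0 ≤ T i j)
    (hrow : ∀ i, ∑ j, T i j = 1)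
    (hprim : ∃ k : ℕ, 0 < k ∧ ∀ a b, 0 < (T ^ k) a b) (a b : Fin n) :
    Summable fun k : ℕ => (T ^ k) a b - 1 / n := by
  obtain ⟨m, hm, hpos⟩ := hprim
  haveI : NeZero m := ⟨by omega⟩
  have hn : 0 < n := a.pos
  haveI : Nonempty (Fin n) := ⟨a⟩
  set δ : ℝ := Finset.univ.inf' (Finset.univ_nonempty (α := Fin n × Fin n))
    (fun p => (T ^ m) p.1 p.2) with hδdef
  have hδle : ∀ c d, δ ≤ (T ^ m) c d := fun c d =>
    Finset.inf'_le _ (Finset.mem_univ (c, d))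
  have hδpos : 0 < δ := by
    rw [hδdef, Finset.lt_inf'_iff]
    exact fun p _ => hpos p.1 p.2
  have hθ0 : 0 ≤ 1 - (n : ℝ) * δ := by
    have h1 : ∑ _l : Fin n, δ ≤ ∑ l, (T ^ m) a l := Finset.sum_le_sum fun l _ => hδle a l
    have h2 := (pow_nonneg_row T hnonneg hrow m).2 a
    simp only [Finset.sum_const, nsmul_eq_mul, Finset.card_univ, Fintype.card_fin] at h1
    linarith
  have hθ1 : 1 - (n : ℝ) * δ < 1 := by
    have : 0 < (n : ℝ) * δ := by positivity
    linarith
  have habs := pow_entry_abs T hsym hnonneg hrow m hm δ hδle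
  have hsum := summable_pow_div (m := m) hθ0 hθ1
  have : Summable fun k : ℕ => |(T ^ k) a b - 1 / n| :=
    Summable.of_nonneg_of_le (fun k => abs_nonneg _) (fun k => habs k a b) hsum
  exact this.of_abs


/-- Lemma 4: for a Markov chain with a symmetric doubly stochastic (primitive)
transition matrix `T` and an essential edge `{i,j}` partitioning the nodes into
`N(i,j) ∋ i` and `N(j,i) ∋ j`:
(a) `m_ij = |N(i,j)| / T_ij`, and (b) `m_ik − m_jk = m_ij` for every `k ∈ N(j,i)`. -/
theorem stmt_10 {n : ℕ}
    (T : Matrix (Fin n) (Fin n) ℝ)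
    (hsym : ∀ i j, T i j = T j i)
    (hnonneg : ∀ i j, 0 ≤ T i j)
    (hrow : ∀ i, ∑ j, T i j = 1)
    (hprim : ∃ k : ℕ, 0 < k ∧ ∀ a b, 0 < (T ^ k) a b)
    -- {i, j} is an edge of the social network graph induced by T
    (i j : Fin n) (hij : i ≠ j) (hTij : 0 < T i j)
    -- deleting {i, j} partitions the nodes into Ni ∋ i and Nj ∋ j with no
    -- other edge crossing the partition (i.e. {i, j} is an essential edge)
    (Ni Nj : Finset (Fin n)) (hiNi : i ∈ Ni) (hjNj : j ∈ Nj)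
    (hdisj : Disjoint Ni Nj) (hcover : Ni ∪ Nj = Finset.univ)
    (hess : ∀ k l : Fin n, k ≠ l → 0 < T k l → ¬(k = i ∧ l = j) → ¬(k = j ∧ l = i) →
      (k ∈ Ni ∧ l ∈ Ni) ∨ (k ∈ Nj ∧ l ∈ Nj)) :
    mfp T i j = (Ni.card : ℝ) / T i j ∧
      ∀ k ∈ Nj, mfp T i k - mfp T j k = mfp T i j := by
  have hn : 0 < n := i.pos
  have hnR : (0:ℝ) < n := by exact_mod_cast hn
  have hsum : ∀ a b : Fin n, Summable fun k : ℕ => (T ^ k) a b - 1 / n :=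
    entry_summable T hsym hnonneg hrow hprim
  have htend0 : ∀ a b : Fin n, Filter.Tendsto (fun k : ℕ => (T ^ k) a b - 1 / n)
      Filter.atTop (nhds 0) := fun a b => (hsum a b).tendsto_atTop_zero
  -- symmetry of powers
  have hT : Tᵀ = T := by ext x y; exact hsym y x
  have hsymk : ∀ (k : ℕ) (c d : Fin n), (T ^ k) c d = (T ^ k) d c := by
    intro k c d
    have h : (T ^ k)ᵀ = T ^ k := by rw [Matrix.transpose_pow, hT]
    conv_lhs => rw [← h]
    rfl
  have hYsym : ∀ a b : Fin n, fundY T a b = fundY T b a := by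
    intro a b
    simp only [fundY, Matrix.of_apply]
    exact tsum_congr fun k => by rw [hsymk k a b]
  -- disjointness facts
  have hjNi : j ∉ Ni := fun h => (Finset.disjoint_left.mp hdisj h) hjNj
  have hiNj : i ∉ Nj := fun h => (Finset.disjoint_left.mp hdisj hiNi) h
  -- the crossing-edge structure
  have hcross : ∀ s l : Fin n, s ∈ Ni → l ∈ Nj → (s ≠ i ∨ l ≠ j) → T s l = 0 := by
    intro s l hs hl hne
    rcases (hnonneg s l).lt_or_eq with hpos | h
    · exfalso
      have hsl : s ≠ l := fun h => (Finset.disjoint_left.mp hdisj (h ▸ hs)) hl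
      have h1 : ¬(s = i ∧ l = j) := fun ⟨h1, h2⟩ => by
        rcases hne with h | h
        · exact h h1
        · exact h h2
      have h2 : ¬(s = j ∧ l = i) := fun ⟨h1, _⟩ =>
        (Finset.disjoint_left.mp hdisj (h1 ▸ hs)) (h1 ▸ hjNj)
      rcases hess s l hsl hpos h1 h2 with ⟨_, hlNi⟩ | ⟨hsNj, _⟩
      · exact (Finset.disjoint_left.mp hdisj hlNi) hl
      · exact (Finset.disjoint_left.mp hdisj hs) hsNj
    · exact h.symm
  have hcross' : ∀ s l : Fin n, s ∈ Nj → l ∈ Ni → (s ≠ j ∨ l ≠ i) → T s l = 0 := by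
    intro s l hs hl hne
    rw [hsym]
    exact hcross l s hl hs (by tauto)
  have hsplit : ∀ s : Fin n, ∑ l ∈ Ni, T s l + ∑ l ∈ Nj, T s l = 1 := by
    intro s
    rw [← Finset.sum_union hdisj, hcover, hrow]
  -- L0: row sums over Ni
  have hTf : ∀ s : Fin n, ∑ l ∈ Ni, T s l =
      (if s ∈ Ni then (1:ℝ) else 0)
        - T i j * ((if s = i then (1:ℝ) else 0) - (if s = j then (1:ℝ) else 0)) := by
    intro s
    by_cases hs : s ∈ Ni
    · have hsj : s ≠ j := fun h => hjNi (h ▸ hs)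
      by_cases hsi : s = i
      · subst hsi
        have : ∑ l ∈ Nj, T s l = T s j :=
          Finset.sum_eq_single_of_mem j hjNj
            (fun l hl hne => hcross s l hs hl (Or.inr hne))
        have h1 := hsplit s
        simp only [hs, if_pos, if_neg hsj, eq_self_iff_true, if_true]
        rw [this] at h1
        linarith
      · have : ∑ l ∈ Nj, T s l = 0 :=
          Finset.sum_eq_zero fun l hl => hcross s l hs hl (Or.inl hsi)
        have h1 := hsplit s
        rw [this] at h1
        simp only [hs, if_pos, if_neg hsi, if_neg hsj]
        linarith
    · have hsNj : s ∈ Nj := by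
        have := Finset.mem_univ s
        rw [← hcover, Finset.mem_union] at this
        tauto
      have hsi : s ≠ i := fun h => hs (h ▸ hiNi)
      by_cases hsj : s = j
      · subst hsj
        have : ∑ l ∈ Ni, T s l = T s i :=
          Finset.sum_eq_single_of_mem i hiNi
            (fun l hl hne => hcross' s l hsNj hl (Or.inr hne))
        rw [this, hsym]
        simp only [if_neg hs, if_neg hsi, eq_self_iff_true, if_true]
        ring
      · have : ∑ l ∈ Ni, T s l = 0 :=
          Finset.sum_eq_zero fun l hl => hcross' s l hsNj hl (Or.inl hsj)
        rw [this]
        simp only [if_neg hs, if_neg hsi, if_neg hsj]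
        ring
  -- key identity
  have hkey : ∀ r : Fin n, T i j * (fundY T r i - fundY T r j) =
      (if r ∈ Ni then (1:ℝ) else 0) - (Ni.card : ℝ) / n := by
    intro r
    set g : ℕ → ℝ := fun k => (∑ l ∈ Ni, (T ^ k) r l) - (Ni.card : ℝ) / n with hg
    have hgeq : ∀ k, g k = ∑ l ∈ Ni, ((T ^ k) r l - 1 / n) := by
      intro k
      rw [hg]
      simp only [Finset.sum_sub_distrib, Finset.sum_const, nsmul_eq_mul]
      ring
    have hstep : ∀ k : ℕ, g k - g (k + 1) = T i j * ((T ^ k) r i - (T ^ k) r j) := by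
      intro k
      have hpow : ∀ l, (T ^ (k + 1)) r l = ∑ s, (T ^ k) r s * T s l := by
        intro l; rw [pow_succ, Matrix.mul_apply]
      have h1 : ∑ l ∈ Ni, (T ^ (k+1)) r l = ∑ s, (T ^ k) r s * ∑ l ∈ Ni, T s l := by
        simp only [hpow, Finset.mul_sum]
        rw [Finset.sum_comm]
      have h2 : ∑ s, (T ^ k) r s * ∑ l ∈ Ni, T s l
          = (∑ s ∈ Ni, (T ^ k) r s) - T i j * ((T ^ k) r i - (T ^ k) r j) := by
        simp only [hTf, mul_sub, mul_ite, mul_one, mul_zero]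
        rw [Finset.sum_sub_distrib, Finset.sum_sub_distrib]
        rw [Finset.sum_ite_mem, Finset.univ_inter]
        rw [Finset.sum_ite_eq' Finset.univ i (fun s => (T ^ k) r s * T i j)]
        rw [Finset.sum_ite_eq' Finset.univ j (fun s => (T ^ k) r s * T i j)]
        simp only [Finset.mem_univ, if_true]
        ring
      rw [hg]
      simp only []
      rw [h1, h2]
      ring
    have hgtend : Filter.Tendsto g Filter.atTop (nhds 0) := by
      have : Filter.Tendsto (fun k => ∑ l ∈ Ni, ((T ^ k) r l - 1 / n))
          Filter.atTop (nhds (∑ l ∈ Ni, (0:ℝ))) :=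
        tendsto_finset_sum _ fun l _ => htend0 r l
      simp only [Finset.sum_const_zero] at this
      exact (Filter.tendsto_congr fun k => (hgeq k).symm).mp this
    have hgsum : Summable fun k => g k - g (k + 1) := by
      have : Summable fun k : ℕ => T i j * (((T ^ k) r i - 1/n) - ((T ^ k) r j - 1/n)) :=
        ((hsum r i).sub (hsum r j)).mul_left _
      refine this.congr fun k => ?_
      rw [hstep k]; ring
    have hHS : HasSum (fun k => g k - g (k + 1)) (g 0) := by
      rw [hgsum.hasSum_iff_tendsto_nat]
      have hps : ∀ N, ∑ k ∈ Finset.range N, (g k - g (k+1)) = g 0 - g N :=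
        fun N => Finset.sum_range_sub' g N
      simp only [hps]
      have := Filter.Tendsto.sub (tendsto_const_nhds (x := g 0)) hgtend
      simpa using this
    have hg0 : g 0 = (if r ∈ Ni then (1:ℝ) else 0) - (Ni.card : ℝ) / n := by
      rw [hg]
      simp only [pow_zero, Matrix.one_apply]
      congr 1
      rw [Finset.sum_ite_eq Ni r (fun _ => (1:ℝ))]
    have hts : T i j * (fundY T r i - fundY T r j) = ∑' k, (g k - g (k+1)) := by
      simp only [fundY, Matrix.of_apply]
      rw [← Summable.tsum_sub (hsum r i) (hsum r j), ← tsum_mul_left]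
      exact tsum_congr fun k => by rw [hstep k]; ring
    rw [hts, hHS.tsum_eq, hg0]
  -- part (a)
  have hTijne : T i j ≠ 0 := ne_of_gt hTij
  have ha : mfp T i j = (Ni.card : ℝ) / T i j := by
    have h := hkey j
    rw [if_neg hjNi] at h
    rw [mfp, hYsym i j]
    have : fundY T j j - fundY T j i = (Ni.card : ℝ) / n / T i j := by
      field_simp at h ⊢
      linarith
    rw [this]
    field_simp
  refine ⟨ha, ?_⟩
  intro k hk
  have hkNi : k ∉ Ni := fun h => (Finset.disjoint_left.mp hdisj h) hk
  have h := hkey k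
  rw [if_neg hkNi] at h
  rw [ha]
  rw [mfp, mfp, hYsym i k, hYsym j k]
  have : fundY T k j - fundY T k i = (Ni.card : ℝ) / n / T i j := by
    field_simp at h ⊢
    linarith
  have hfinal : (n:ℝ) * (fundY T k k - fundY T k i) - n * (fundY T k k - fundY T k j)
      = (Ni.card : ℝ) / T i j := by
    have h2 : (n:ℝ) * (fundY T k k - fundY T k i) - n * (fundY T k k - fundY T k j)
        = n * (fundY T k j - fundY T k i) := by ring
    rw [h2, this]
    field_simp
  exact hfinal
end
end
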